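/- arXiv:2407.00775 — 6 statements merged into one kernel-verified Lean document; each statement's English description precedes it below -/
import Mathlib

section
/- If F : ℝ² → ℝ is C¹ and strictly convex (so that G = ∇F is continuous and strictly monotone), then S̃(∇F) = S(∇F). -/
open Filter Metric MeasureTheory Topology

noncomputable section

local notation "⟪" x ", " y "⟫" => @inner ℝ ℂ _ x y

/-- A vector field on ℝ² ≅ ℂ is strictly monotone. -/
def StrictlyMonotoneField (G : ℂ → ℂ) : Prop :=
  ∀ ξ ζ : ℂ, ξ ≠ ζ → 0 < ⟪G ξ - G ζ, ξ - ζ⟫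

/-- Strongly monotone vector field. -/
def StronglyMonotoneField (G : ℂ → ℂ) : Prop :=
  ∃ C > 0, ∀ ξ ζ : ℂ, ‖ξ - ζ‖ ^ 2 + ‖G ξ - G ζ‖ ^ 2 ≤ C * ⟪G ξ - G ζ, ξ - ζ⟫

/-- liminf as ζ → 0 of ⟨G(ξ+ζ)−G(ξ), ζ⟩/|ζ|², valued in EReal. -/
def liminfD (G : ℂ → ℂ) (ξ : ℂ) : EReal :=
  liminf (fun ζ : ℂ => ((⟪G (ξ + ζ) - G ξ, ζ⟫ / ‖ζ‖ ^ 2 : ℝ) : EReal)) (𝓝[≠] 0)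

/-- liminf as ζ → 0 of ⟨G(ξ+ζ)−G(ξ), ζ⟩/|G(ξ+ζ)−G(ξ)|², valued in EReal. -/
def liminfS (G : ℂ → ℂ) (ξ : ℂ) : EReal :=
  liminf (fun ζ : ℂ =>
    ((⟪G (ξ + ζ) - G ξ, ζ⟫ / ‖G (ξ + ζ) - G ξ‖ ^ 2 : ℝ) : EReal)) (𝓝[≠] 0)

/-- limsup as ζ → 0 of ⟨G(ξ+ζ)−G(ξ), ζ⟩/|ζ|², valued in EReal. -/
def limsupD (G : ℂ → ℂ) (ξ : ℂ) : EReal :=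
  limsup (fun ζ : ℂ => ((⟪G (ξ + ζ) - G ξ, ζ⟫ / ‖ζ‖ ^ 2 : ℝ) : EReal)) (𝓝[≠] 0)

/-- The set D(G) where ellipticity degenerates from below. -/
def Dset (G : ℂ → ℂ) : Set ℂ :=
  ⋂ lam > (0:ℝ), closure {ξ : ℂ | liminfD G ξ ≤ (lam : EReal)}

/-- The set S(G) where ellipticity degenerates from above. -/
def Sset (G : ℂ → ℂ) : Set ℂ :=
  ⋂ Lam > (0:ℝ), closure {ξ : ℂ | liminfS G ξ ≤ ((1 / Lam : ℝ) : EReal)}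

/-- The set S̃(G). -/
def StildeSet (G : ℂ → ℂ) : Set ℂ :=
  ⋂ Lam > (0:ℝ), closure {ξ : ℂ | (Lam : EReal) ≤ limsupD G ξ}

/-- The open set O_λ(G). -/
def Oset (G : ℂ → ℂ) (lam : ℝ) : Set ℂ :=
  interior {ξ : ℂ | (lam : EReal) ≤ liminfD G ξ}

/-- The open set V_Λ(G). -/
def Vset (G : ℂ → ℂ) (Lam : ℝ) : Set ℂ :=
  interior {ξ : ℂ | ((1 / Lam : ℝ) : EReal) ≤ liminfS G ξ}

/-- Modulus of monotony. -/
def omegaG (G : ℂ → ℂ) (t : ℝ) : ℝ :=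
  sInf {a : ℝ | ∃ ξ ζ : ℂ, t < ‖ξ - ζ‖ ∧ a = ⟪G ξ - G ζ, ξ - ζ⟫}

/-- Divergence of a planar vector field. -/
def pdiv (w : ℂ → ℂ) (x : ℂ) : ℝ :=
  (fderiv ℝ w x 1).re + (fderiv ℝ w x Complex.I).im

/-- u is a (pointwise) smooth solution of div G(∇u) = 0 in B₁. -/
def IsSmoothSol (G : ℂ → ℂ) (u : ℂ → ℝ) : Prop :=
  ContDiffOn ℝ (⊤ : ℕ∞) u (ball 0 1) ∧
    ∀ x ∈ ball (0:ℂ) 1, pdiv (fun y => G (gradient u y)) x = 0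

/-- u is a weak solution of div G(∇u) = 0 in B₁. -/
def IsWeakSol (G : ℂ → ℂ) (u : ℂ → ℝ) : Prop :=
  ∀ φ : ℂ → ℝ, ContDiff ℝ (⊤ : ℕ∞) φ → HasCompactSupport φ → tsupport φ ⊆ ball 0 1 →
    ∫ x in ball (0:ℂ) 1, ⟪G (gradient u x), gradient φ x⟫ = 0

/-- Wirtinger derivative f_z. -/
def wZ (f : ℂ → ℂ) (z : ℂ) : ℂ :=
  (fderiv ℝ f z 1 - Complex.I * fderiv ℝ f z Complex.I) / 2

/-- Wirtinger derivative f_z̄. -/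
def wZbar (f : ℂ → ℂ) (z : ℂ) : ℂ :=
  (fderiv ℝ f z 1 + Complex.I * fderiv ℝ f z Complex.I) / 2

/-- L_H(ξ,ζ) = (H(ξ+ζ)−H(ξ))/conj(ζ). -/
def LH (H : ℂ → ℂ) (ξ ζ : ℂ) : ℂ := (H (ξ + ζ) - H ξ) / (starRingEnd ℂ ζ)

/-- Γ₊ associated to H. -/
def GammaP (H : ℂ → ℂ) : Set ℂ :=
  ⋂ lam > (0:ℝ), closure {ξ : ℂ |
    liminf (fun ζ : ℂ =>
      (((1 - ‖LH H ξ ζ‖ ^ 2) / ‖1 + LH H ξ ζ‖ ^ 2 : ℝ) : EReal)) (𝓝[≠] 0) ≤ (lam : EReal)}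

/-- Γ₋ associated to H. -/
def GammaM (H : ℂ → ℂ) : Set ℂ :=
  ⋂ lam > (0:ℝ), closure {ξ : ℂ |
    liminf (fun ζ : ℂ =>
      (((1 - ‖LH H ξ ζ‖ ^ 2) / ‖1 - LH H ξ ζ‖ ^ 2 : ℝ) : EReal)) (𝓝[≠] 0) ≤ (lam : EReal)}

/-- H is strictly 1-Lipschitz. -/
def StrictlyOneLipschitz (H : ℂ → ℂ) : Prop :=
  ∀ ξ ζ : ℂ, ξ ≠ ζ → ‖H ξ - H ζ‖ < ‖ξ - ζ‖

/-- f is a Lipschitz solution of the Beltrami equation f_z̄ = H(f_z) in B₁. -/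
def IsBeltramiSol (H : ℂ → ℂ) (f : ℂ → ℂ) : Prop :=
  (∃ K : NNReal, LipschitzOnWith K f (ball 0 1)) ∧
    ∀ᵐ z : ℂ, z ∈ ball (0:ℂ) 1 → wZbar f z = H (wZ f z)

/-- F(z) = (H(z)+conj z)/2. -/
def Fmap (H : ℂ → ℂ) (z : ℂ) : ℂ := (H z + starRingEnd ℂ z) / 2

/-- F_*(z) = (H(z)−conj z)/(2i). -/
def Fstar (H : ℂ → ℂ) (z : ℂ) : ℂ := (H z - starRingEnd ℂ z) / (2 * Complex.I)

/-- Condition (∞). -/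
def CondInfty (H : ℂ → ℂ) : Prop :=
  Tendsto (fun z : ℂ => ‖z‖ + ⟪starRingEnd ℂ (H z), z⟫ / ‖z‖) (Bornology.cobounded ℂ) atTop ∧
  Tendsto (fun z : ℂ => ‖z‖ - ⟪starRingEnd ℂ (H z), z⟫ / ‖z‖) (Bornology.cobounded ℂ) atTop

/-- Squared Frobenius norm of the Hessian of u. -/
def hessNormSq (u : ℂ → ℝ) (x : ℂ) : ℝ :=
  ‖fderiv ℝ (gradient u) x 1‖ ^ 2 + ‖fderiv ℝ (gradient u) x Complex.I‖ ^ 2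

/-- Squared Frobenius norm of the Jacobian of a planar map w. -/
def jacNormSq (w : ℂ → ℂ) (x : ℂ) : ℝ :=
  ‖fderiv ℝ w x 1‖ ^ 2 + ‖fderiv ℝ w x Complex.I‖ ^ 2



section AuxStmt3

open Set

lemma my_grad_apply (F : ℂ → ℝ) (x v : ℂ) : ⟪gradient F x, v⟫ = fderiv ℝ F x v := by
  simp [gradient, InnerProductSpace.toDual_symm_apply]

lemma my_grad_cont {F : ℂ → ℝ} (hF : ContDiff ℝ 1 F) : Continuous (gradient F) :=
  (InnerProductSpace.toDual ℝ ℂ).symm.continuous.comp (hF.continuous_fderiv one_ne_zero)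

lemma my_lineDeriv {F : ℂ → ℝ} (hF : ContDiff ℝ 1 F) (w Δ : ℂ) (t : ℝ) :
    HasDerivAt (fun s : ℝ => F (s • Δ + w)) (⟪gradient F (t • Δ + w), Δ⟫) t := by
  have hc : HasDerivAt (fun s : ℝ => s • Δ + w) Δ t := by
    simpa using ((hasDerivAt_id t).smul_const Δ).add_const w
  have hFf : HasFDerivAt F (fderiv ℝ F (t • Δ + w)) (t • Δ + w) :=
    ((hF.differentiable one_ne_zero) (t • Δ + w)).hasFDerivAt
  have := hFf.comp_hasDerivAt t hc
  rw [my_grad_apply]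
  exact this

lemma my_subgrad {F : ℂ → ℝ} (hF : ContDiff ℝ 1 F) (hconv : ConvexOn ℝ Set.univ F)
    (x y : ℂ) : F x + ⟪gradient F x, y - x⟫ ≤ F y := by
  set g : ℝ → ℝ := fun t : ℝ => F (t • (y - x) + x) with hgdef
  have hg : ConvexOn ℝ Set.univ g := by
    have := hconv.comp_affineMap (AffineMap.lineMap x y)
    have he : (F ∘ (AffineMap.lineMap x y : ℝ →ᵃ[ℝ] ℂ)) = g := by
      funext t
      simp [hgdef, Function.comp, AffineMap.lineMap_apply, vsub_eq_sub, vadd_eq_add,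
        add_comm]
    rw [he] at this
    simpa using this
  have hd : HasDerivAt g (⟪gradient F x, y - x⟫) 0 := by
    have := my_lineDeriv hF x (y - x) 0
    simpa [hgdef] using this
  have h := hg.le_slope_of_hasDerivAt (Set.mem_univ (0:ℝ)) (Set.mem_univ (1:ℝ)) one_pos hd
  have hs : slope g 0 1 = F y - F x := by
    simp [slope_def_field, hgdef]
  rw [hs] at h
  linarith

lemma my_strictmono {F : ℂ → ℝ} (hF : ContDiff ℝ 1 F) (hconv : StrictConvexOn ℝ Set.univ F)
    {x y : ℂ} (hxy : x ≠ y) : 0 < ⟪gradient F x - gradient F y, x - y⟫ := by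
  set m : ℂ := (1/2 : ℝ) • x + (1/2 : ℝ) • y with hm
  have hstrict : F m < (1/2) * F x + (1/2) * F y :=
    hconv.2 (Set.mem_univ x) (Set.mem_univ y) hxy (by norm_num) (by norm_num) (by norm_num)
  have h1 := my_subgrad hF hconv.convexOn x m
  have h2 := my_subgrad hF hconv.convexOn y m
  have e1 : m - x = (1/2 : ℝ) • (y - x) := by rw [hm]; module
  have e2 : m - y = (1/2 : ℝ) • (x - y) := by rw [hm]; module
  rw [e1, real_inner_smul_right] at h1
  rw [e2, real_inner_smul_right] at h2
  have e3 : ⟪gradient F x, y - x⟫ = -⟪gradient F x, x - y⟫ := by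
    rw [← inner_neg_right]; ring_nf
  rw [e3] at h1
  have e4 : ⟪gradient F x - gradient F y, x - y⟫
      = ⟪gradient F x, x - y⟫ - ⟪gradient F y, x - y⟫ := by rw [inner_sub_left]
  linarith

lemma my_stepB {F : ℂ → ℝ} (hF : ContDiff ℝ 1 F) {ξ : ℂ} {r lam : ℝ}
    (hloc : ∀ x ∈ ball ξ r, ∀ᶠ ζ in 𝓝[≠] (0:ℂ),
      ⟪gradient F (x + ζ) - gradient F x, ζ⟫ < lam * ‖ζ‖ ^ 2) :
    ∀ x ∈ ball ξ r, ∀ y ∈ ball ξ r,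
      ⟪gradient F x - gradient F y, x - y⟫ ≤ lam * ‖x - y‖ ^ 2 := by
  intro x hx y hy
  rcases eq_or_ne x y with rfl | hxy
  · simp
  set Δ : ℂ := x - y with hΔ
  have hΔ0 : Δ ≠ 0 := sub_ne_zero.mpr hxy
  set c : ℝ := ‖Δ‖ ^ 2 with hc
  have hcpos : 0 < c := pow_pos (norm_pos_iff.mpr hΔ0) 2
  set h : ℝ → ℝ := fun t => ⟪gradient F (t • Δ + y), Δ⟫ with hhdef
  have hcont : Continuous h := by
    apply Continuous.inner
    · exact (my_grad_cont hF).comp (by continuity)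
    · exact continuous_const
  have hmem : ∀ t ∈ Icc (0:ℝ) 1, t • Δ + y ∈ ball ξ r := by
    intro t ht
    have := (convex_ball ξ r) hx hy (a := t) (b := 1 - t) ht.1 (by linarith [ht.2]) (by ring)
    have e : t • x + (1 - t) • y = t • Δ + y := by rw [hΔ]; module
    rwa [e] at this
  have key : ∀ s ∈ Icc (0:ℝ) 1, h s ≤ (fun s => h 0 + lam * c * s) s := by
    apply image_le_of_liminf_slope_right_le_deriv_boundary
      (B' := fun _ => lam * c) hcont.continuousOn (by simp)
    · exact (continuous_const.add ((continuous_const.mul continuous_id))).continuousOn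
    · intro t _
      simpa using (((hasDerivAt_id t).const_mul (lam * c)).const_add (h 0)).hasDerivWithinAt
    · intro t ht ρ hρ
      have hw := hmem t (Ico_subset_Icc_self ht)
      set w : ℂ := t • Δ + y with hw'
      have hev := hloc w hw
      have htend : Tendsto (fun z : ℝ => (z - t) • Δ) (𝓝[>] t) (𝓝[≠] (0:ℂ)) := by
        rw [tendsto_nhdsWithin_iff]
        constructor
        · have : Tendsto (fun z : ℝ => (z - t) • Δ) (𝓝 t) (𝓝 ((t - t) • Δ)) :=
            Tendsto.smul_const ((continuous_id.sub continuous_const).tendsto t) Δ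
          simpa using this.mono_left nhdsWithin_le_nhds
        · filter_upwards [self_mem_nhdsWithin] with z hz
          have hzt : z - t ≠ 0 := sub_ne_zero.mpr (ne_of_gt hz)
          simp only [Set.mem_compl_iff, Set.mem_singleton_iff]
          exact smul_ne_zero hzt hΔ0
      apply Eventually.frequently
      filter_upwards [htend.eventually hev, self_mem_nhdsWithin] with z hz (hz' : t < z)
      have hzt : 0 < z - t := by linarith
      have e1 : w + (z - t) • Δ = z • Δ + y := by rw [hw']; module
      rw [e1] at hz
      have e2 : ⟪gradient F (z • Δ + y) - gradient F w, (z - t) • Δ⟫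
          = (z - t) * (h z - h t) := by
        rw [real_inner_smul_right, inner_sub_left, hhdef, hw']
      have e3 : ‖(z - t) • Δ‖ ^ 2 = (z - t) ^ 2 * c := by
        rw [norm_smul, mul_pow, hc, Real.norm_eq_abs, sq_abs]
      rw [e2, e3] at hz
      have hslope : slope h t z < lam * c := by
        rw [slope_def_field, div_lt_iff₀ hzt]
        nlinarith
      exact hslope.trans hρ
  have h1 := key 1 (by norm_num)
  have e4 : h 1 = ⟪gradient F x, Δ⟫ := by simp [hhdef, hΔ]
  have e5 : h 0 = ⟪gradient F y, Δ⟫ := by simp [hhdef]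
  simp only [e4, e5] at h1
  rw [inner_sub_left]
  linarith

lemma my_stepQ {F : ℂ → ℝ} (hF : ContDiff ℝ 1 F) {ξ : ℂ} {r lam : ℝ}
    (hB : ∀ x ∈ ball ξ r, ∀ y ∈ ball ξ r,
      ⟪gradient F x - gradient F y, x - y⟫ ≤ lam * ‖x - y‖ ^ 2) :
    ∀ w ∈ ball ξ r, ∀ z ∈ ball ξ r,
      F z ≤ F w + ⟪gradient F w, z - w⟫ + lam * ‖z - w‖ ^ 2 / 2 := by
  intro w hw z hz
  set Δ : ℂ := z - w with hΔ
  set n : ℝ := ‖Δ‖ ^ 2 with hn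
  set ip : ℝ := ⟪gradient F w, Δ⟫ with hip
  set f : ℝ → ℝ := fun t => F (t • Δ + w) with hfdef
  have hmem : ∀ t ∈ Icc (0:ℝ) 1, t • Δ + w ∈ ball ξ r := by
    intro t ht
    have := (convex_ball ξ r) hz hw (a := t) (b := 1 - t) ht.1 (by linarith [ht.2]) (by ring)
    have e : t • z + (1 - t) • w = t • Δ + w := by rw [hΔ]; module
    rwa [e] at this
  have hfd : ∀ t : ℝ, HasDerivAt f (⟪gradient F (t • Δ + w), Δ⟫) t := fun t =>
    my_lineDeriv hF w Δ t
  have hf'le : ∀ t ∈ Icc (0:ℝ) 1, ⟪gradient F (t • Δ + w), Δ⟫ ≤ ip + lam * n * t := by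
    intro t ht
    rcases eq_or_lt_of_le ht.1 with rfl | htpos
    · simp [hip]
    · have h1 := hB (t • Δ + w) (hmem t ht) w hw
      have e1 : t • Δ + w - w = t • Δ := by ring
      rw [e1, real_inner_smul_right, inner_sub_left] at h1
      have e2 : ‖t • Δ‖ ^ 2 = t ^ 2 * n := by
        rw [norm_smul, mul_pow, hn, Real.norm_eq_abs, sq_abs]
      rw [e2] at h1
      nlinarith
  have key : ∀ s ∈ Icc (0:ℝ) 1, f s ≤ (fun s => F w + ip * s + lam * n / 2 * s ^ 2) s := by
    apply image_le_of_liminf_slope_right_le_deriv_boundary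
      (B' := fun t => ip + lam * n * t) (fun t _ => (hfd t).continuousAt.continuousWithinAt)
      (by simp [hfdef])
    · exact (by continuity :
        Continuous fun s : ℝ => F w + ip * s + lam * n / 2 * s ^ 2).continuousOn
    · intro t _
      have : HasDerivAt (fun s : ℝ => F w + ip * s + lam * n / 2 * s ^ 2)
          (ip + lam * n * t) t := by
        have h1 : HasDerivAt (fun s : ℝ => s ^ 2) (2 * t) t := by
          simpa using hasDerivAt_pow 2 t
        have := (((hasDerivAt_id t).const_mul ip).const_add (F w)).add
          (h1.const_mul (lam * n / 2))
        rw [show ip + lam * n * t = ip * 1 + lam * n / 2 * (2 * t) by ring]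
        exact this
      exact this.hasDerivWithinAt
    · intro t ht ρ hρ
      have hlt : ⟪gradient F (t • Δ + w), Δ⟫ < ρ :=
        lt_of_le_of_lt (hf'le t (Ico_subset_Icc_self ht)) hρ
      have htends := hasDerivAt_iff_tendsto_slope.mp (hfd t)
      have : ∀ᶠ z' in 𝓝[>] t, slope f t z' < ρ :=
        (htends.mono_left (nhdsWithin_mono t (fun a (ha : t < a) => ne_of_gt ha)))
          |>.eventually (Filter.Tendsto.eventually_lt_const hlt tendsto_id) |>.mono (fun _ h => h)
      exact this.frequently
  have h1 := key 1 (by norm_num)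
  simp only [hfdef] at h1
  have e4 : (1:ℝ) • Δ + w = z := by rw [hΔ]; module
  rw [e4] at h1
  calc F z ≤ F w + ip * 1 + lam * n / 2 * 1 ^ 2 := h1
    _ = F w + ⟪gradient F w, z - w⟫ + lam * ‖z - w‖ ^ 2 / 2 := by rw [hip, hn, hΔ]; ring

lemma my_oneSided {F : ℂ → ℝ} (hF : ContDiff ℝ 1 F) (hconv : ConvexOn ℝ Set.univ F)
    {ξ : ℂ} {r lam : ℝ} (hlam : 0 < lam)
    (hQ : ∀ w ∈ ball ξ r, ∀ z ∈ ball ξ r,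
      F z ≤ F w + ⟪gradient F w, z - w⟫ + lam * ‖z - w‖ ^ 2 / 2)
    {x y : ℂ} (hx : x ∈ ball ξ (r/2)) (hy : y ∈ ball ξ (r/2))
    (hd : ‖gradient F y - gradient F x‖ ≤ lam * (r/2)) :
    F x + ⟪gradient F x, y - x⟫ + ‖gradient F y - gradient F x‖ ^ 2 / (2 * lam) ≤ F y := by
  set d : ℂ := gradient F y - gradient F x with hdd
  set z : ℂ := y - lam⁻¹ • d with hzd
  have hrpos : 0 < r := by
    by_contra hr
    exact (not_lt.mpr (by linarith : r / 2 ≤ 0)) (lt_of_le_of_lt dist_nonneg (mem_ball.mp hx))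
  have hzball : z ∈ ball ξ r := by
    have h1 : ‖lam⁻¹ • d‖ ≤ r / 2 := by
      rw [norm_smul, Real.norm_eq_abs, abs_inv, abs_of_pos hlam]
      rw [inv_mul_le_iff₀ hlam]
      linarith [hd]
    have h2 : dist z ξ ≤ dist y ξ + ‖lam⁻¹ • d‖ := by
      rw [hzd]
      calc dist (y - lam⁻¹ • d) ξ ≤ dist (y - lam⁻¹ • d) y + dist y ξ := dist_triangle _ _ _
        _ = ‖lam⁻¹ • d‖ + dist y ξ := by rw [dist_eq_norm]; simp
        _ = dist y ξ + ‖lam⁻¹ • d‖ := by ring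
    have h3 := mem_ball.mp hy
    exact mem_ball.mpr (lt_of_le_of_lt h2 (by linarith))
  have hyball : y ∈ ball ξ r := mem_ball.mpr (lt_of_lt_of_le (mem_ball.mp hy) (by linarith))
  have hsub := my_subgrad hF hconv x z
  have hq := hQ y hyball z hzball
  have e1 : z - y = -(lam⁻¹ • d) := by rw [hzd]; ring
  have e2 : z - x = (y - x) - lam⁻¹ • d := by rw [hzd]; ring
  have e3 : ⟪gradient F x, z - x⟫ = ⟪gradient F x, y - x⟫ - lam⁻¹ * ⟪gradient F x, d⟫ := by
    rw [e2, inner_sub_right, real_inner_smul_right]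
  have e4 : ⟪gradient F y, z - y⟫ = -(lam⁻¹ * ⟪gradient F y, d⟫) := by
    rw [e1, inner_neg_right, real_inner_smul_right]
  have e5 : ‖z - y‖ ^ 2 = lam⁻¹ ^ 2 * ‖d‖ ^ 2 := by
    rw [e1, norm_neg, norm_smul, mul_pow, Real.norm_eq_abs, sq_abs]
  have e6 : ⟪gradient F y, d⟫ - ⟪gradient F x, d⟫ = ‖d‖ ^ 2 := by
    rw [← inner_sub_left, ← hdd, real_inner_self_eq_norm_sq]
  rw [e3] at hsub
  rw [e4, e5] at hq
  have hlam' : lam⁻¹ > 0 := inv_pos.mpr hlam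
  have expand : lam * (lam⁻¹ ^ 2 * ‖d‖ ^ 2) / 2 = lam⁻¹ * ‖d‖ ^ 2 / 2 := by
    field_simp
  rw [expand] at hq
  have final : F x + ⟪gradient F x, y - x⟫ + lam⁻¹ * ‖d‖ ^ 2 / 2 ≤ F y := by nlinarith
  calc F x + ⟪gradient F x, y - x⟫ + ‖d‖ ^ 2 / (2 * lam)
      = F x + ⟪gradient F x, y - x⟫ + lam⁻¹ * ‖d‖ ^ 2 / 2 := by
        field_simp
    _ ≤ F y := final

lemma my_coco {F : ℂ → ℝ} (hF : ContDiff ℝ 1 F) (hconv : ConvexOn ℝ Set.univ F)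
    {ξ : ℂ} {r lam : ℝ} (hlam : 0 < lam)
    (hQ : ∀ w ∈ ball ξ r, ∀ z ∈ ball ξ r,
      F z ≤ F w + ⟪gradient F w, z - w⟫ + lam * ‖z - w‖ ^ 2 / 2)
    {x y : ℂ} (hx : x ∈ ball ξ (r/2)) (hy : y ∈ ball ξ (r/2))
    (hd : ‖gradient F y - gradient F x‖ ≤ lam * (r/2)) :
    ‖gradient F y - gradient F x‖ ^ 2 ≤ lam * ⟪gradient F y - gradient F x, y - x⟫ := by
  have h1 := my_oneSided hF hconv hlam hQ hx hy hd
  have hd' : ‖gradient F x - gradient F y‖ ≤ lam * (r/2) := by rwa [norm_sub_rev]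
  have h2 := my_oneSided hF hconv hlam hQ hy hx hd'
  rw [norm_sub_rev] at h2
  have e1 : ⟪gradient F y, x - y⟫ = -⟪gradient F y, y - x⟫ := by
    rw [← inner_neg_right]; ring_nf
  rw [e1] at h2
  have e2 : ⟪gradient F y - gradient F x, y - x⟫
      = ⟪gradient F y, y - x⟫ - ⟪gradient F x, y - x⟫ := inner_sub_left _ _ _
  have hsum : ‖gradient F y - gradient F x‖ ^ 2 / lam
      ≤ ⟪gradient F y - gradient F x, y - x⟫ := by
    have := add_le_add h1 h2
    rw [e2]
    have hexp : ‖gradient F y - gradient F x‖ ^ 2 / (2 * lam)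
        + ‖gradient F y - gradient F x‖ ^ 2 / (2 * lam)
        = ‖gradient F y - gradient F x‖ ^ 2 / lam := by field_simp; ring
    nlinarith
  calc ‖gradient F y - gradient F x‖ ^ 2
      = lam * (‖gradient F y - gradient F x‖ ^ 2 / lam) := by field_simp
    _ ≤ lam * ⟪gradient F y - gradient F x, y - x⟫ :=
        mul_le_mul_of_nonneg_left hsum hlam.le

lemma my_dir1 {F : ℂ → ℝ} (hF : ContDiff ℝ 1 F) (hconv : StrictConvexOn ℝ Set.univ F)
    {Lam : ℝ} (hLam : 0 < Lam) {ξ : ℂ}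
    (h : (Lam : EReal) ≤ limsupD (gradient F) ξ) :
    liminfS (gradient F) ξ ≤ ((1 / Lam : ℝ) : EReal) := by
  by_contra hlt
  push_neg at hlt
  obtain ⟨c, hc1, hc2⟩ := EReal.exists_between_coe_real hlt
  rw [EReal.coe_lt_coe_iff] at hc1
  have hc0 : 0 < c := lt_trans (by positivity) hc1
  set μ : ℝ := 1 / c with hμ
  have hμ0 : 0 < μ := by positivity
  have hμLam : μ < Lam := by
    rw [hμ, div_lt_iff₀ hc0]
    have := (div_lt_iff₀ hLam).mp hc1
    linarith [mul_comm Lam c ▸ this]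
  have hfreq : ∃ᶠ ζ in 𝓝[≠] (0:ℂ),
      ((μ : ℝ) : EReal)
        < ((⟪gradient F (ξ + ζ) - gradient F ξ, ζ⟫ / ‖ζ‖ ^ 2 : ℝ) : EReal) :=
    frequently_lt_of_lt_limsup (by isBoundedDefault)
      (lt_of_lt_of_le (by exact_mod_cast EReal.coe_lt_coe_iff.mpr hμLam) h)
  have hfreq2 : ∃ᶠ ζ in 𝓝[≠] (0:ℂ),
      ((⟪gradient F (ξ + ζ) - gradient F ξ, ζ⟫
          / ‖gradient F (ξ + ζ) - gradient F ξ‖ ^ 2 : ℝ) : EReal) ≤ ((c : ℝ) : EReal) := by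
    apply (hfreq.and_eventually self_mem_nhdsWithin).mono
    rintro ζ ⟨haζ, (hζ : ζ ∈ ({0}ᶜ : Set ℂ))⟩
    have hζ0 : ζ ≠ 0 := hζ
    rw [EReal.coe_lt_coe_iff] at haζ
    rw [EReal.coe_le_coe_iff]
    set d : ℂ := gradient F (ξ + ζ) - gradient F ξ with hd
    have hg : 0 < ⟪d, ζ⟫ := by
      have := my_strictmono hF hconv (x := ξ + ζ) (y := ξ) (by simpa using hζ0)
      simpa [hd] using this
    have hd0 : d ≠ 0 := by
      intro h0
      rw [h0] at hg
      simp at hg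
    have hnd : 0 < ‖d‖ ^ 2 := pow_pos (norm_pos_iff.mpr hd0) 2
    have hnζ : 0 < ‖ζ‖ ^ 2 := pow_pos (norm_pos_iff.mpr hζ0) 2
    have hCS : ⟪d, ζ⟫ ≤ ‖d‖ * ‖ζ‖ := real_inner_le_norm d ζ
    have hμζ : μ * ‖ζ‖ ^ 2 < ⟪d, ζ⟫ := by
      have := (lt_div_iff₀ hnζ).mp haζ
      linarith
    rw [div_le_iff₀ hnd]
    have key : μ * ⟪d, ζ⟫ ≤ ‖d‖ ^ 2 := by nlinarith
    have : ⟪d, ζ⟫ ≤ ‖d‖ ^ 2 / μ :=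
      (le_div_iff₀ hμ0).mpr (by linarith [mul_comm μ ⟪d, ζ⟫ ▸ key])
    calc ⟪d, ζ⟫ ≤ ‖d‖ ^ 2 / μ := this
      _ = c * ‖d‖ ^ 2 := by rw [hμ]; field_simp
  have : liminfS (gradient F) ξ ≤ ((c : ℝ) : EReal) :=
    liminf_le_of_frequently_le' hfreq2
  exact absurd (lt_of_lt_of_le hc2 this) (lt_irrefl _)

end AuxStmt3

theorem stmt3 (F : ℂ → ℝ) (hF : ContDiff ℝ 1 F)
    (hconv : StrictConvexOn ℝ Set.univ F) :
    StildeSet (gradient F) = Sset (gradient F) := by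
  have hconvx : ConvexOn ℝ Set.univ F := hconv.convexOn
  apply Set.Subset.antisymm
  · -- S̃ ⊆ S
    intro x hx
    simp only [Sset, Set.mem_iInter]
    intro Lam hLam
    simp only [StildeSet, Set.mem_iInter] at hx
    refine closure_mono ?_ (hx Lam hLam)
    intro z hz
    exact my_dir1 hF hconv hLam hz
  · -- S ⊆ S̃
    intro ξ hξ
    by_contra hns
    simp only [StildeSet, Set.mem_iInter] at hns
    push_neg at hns
    obtain ⟨lam0, hlam0, hnc⟩ := hns
    obtain ⟨r, hr, hball⟩ :=
      Metric.isOpen_iff.mp isClosed_closure.isOpen_compl ξ hnc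
    have hloc : ∀ x ∈ ball ξ r, ∀ᶠ ζ in 𝓝[≠] (0:ℂ),
        ⟪gradient F (x + ζ) - gradient F x, ζ⟫ < lam0 * ‖ζ‖ ^ 2 := by
      intro x hx
      have hnotin : x ∉ closure {z : ℂ | (lam0 : EReal) ≤ limsupD (gradient F) z} := hball hx
      have hnotmem : ¬ ((lam0 : EReal) ≤ limsupD (gradient F) x) := fun hc =>
        hnotin (subset_closure hc)
      have hlt : limsupD (gradient F) x < (lam0 : EReal) := not_le.mp hnotmem
      have hev := eventually_lt_of_limsup_lt hlt (by isBoundedDefault)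
      filter_upwards [hev, self_mem_nhdsWithin] with ζ h1 (hζ : ζ ∈ ({0}ᶜ : Set ℂ))
      have hζ0 : ζ ≠ 0 := hζ
      rw [EReal.coe_lt_coe_iff] at h1
      have hnζ : 0 < ‖ζ‖ ^ 2 := pow_pos (norm_pos_iff.mpr hζ0) 2
      have := (div_lt_iff₀ hnζ).mp h1
      linarith
    have hB := my_stepB hF hloc
    have hQ := my_stepQ hF hB
    have hlower : ∀ x ∈ ball ξ (r/2),
        ((1 / lam0 : ℝ) : EReal) ≤ liminfS (gradient F) x := by
      intro x hx
      have hG := my_grad_cont hF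
      have ht : Tendsto (fun ζ : ℂ => x + ζ) (𝓝 0) (𝓝 x) := by
        simpa using (continuous_add_left x).tendsto (0:ℂ)
      have hev1 : ∀ᶠ ζ in 𝓝 (0:ℂ), x + ζ ∈ ball ξ (r/2) :=
        ht.eventually (isOpen_ball.eventually_mem hx)
      have hev2 : ∀ᶠ ζ in 𝓝 (0:ℂ),
          ‖gradient F (x + ζ) - gradient F x‖ ≤ lam0 * (r/2) := by
        have ht2 : Tendsto (fun ζ : ℂ => ‖gradient F (x + ζ) - gradient F x‖)
            (𝓝 0) (𝓝 0) := by
          have hcont : Continuous fun ζ : ℂ => ‖gradient F (x + ζ) - gradient F x‖ :=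
            ((hG.comp (continuous_const.add continuous_id)).sub continuous_const).norm
          have := hcont.tendsto (0:ℂ)
          simpa using this
        have hpos : (0:ℝ) < lam0 * (r/2) := by positivity
        exact (ht2.eventually (eventually_lt_nhds hpos)).mono fun ζ h => h.le
      apply le_liminf_of_le (by isBoundedDefault)
      filter_upwards [hev1.filter_mono nhdsWithin_le_nhds,
        hev2.filter_mono nhdsWithin_le_nhds, self_mem_nhdsWithin]
        with ζ h1 h2 (hζ : ζ ∈ ({0}ᶜ : Set ℂ))
      have hζ0 : ζ ≠ 0 := hζ
      have hco := my_coco hF hconvx hlam0 hQ hx h1 h2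
      have e : x + ζ - x = ζ := by ring
      rw [e] at hco
      set d : ℂ := gradient F (x + ζ) - gradient F x with hd
      have hg : 0 < ⟪d, ζ⟫ := by
        have := my_strictmono hF hconv (x := x + ζ) (y := x) (by simpa using hζ0)
        simpa [hd] using this
      have hd0 : d ≠ 0 := by
        intro h0
        rw [h0] at hg
        simp at hg
      have hnd : 0 < ‖d‖ ^ 2 := pow_pos (norm_pos_iff.mpr hd0) 2
      rw [EReal.coe_le_coe_iff, le_div_iff₀ hnd, div_mul_eq_mul_div, one_mul,
        div_le_iff₀ hlam0]
      nlinarith [hco]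
    have hmemS : ξ ∈ closure {x : ℂ |
        liminfS (gradient F) x ≤ ((1 / (lam0 + 1) : ℝ) : EReal)} := by
      simp only [Sset, Set.mem_iInter] at hξ
      exact hξ (lam0 + 1) (by linarith)
    obtain ⟨x, hx1, hx2⟩ :=
      (_root_.mem_closure_iff.mp hmemS (ball ξ (r/2)) isOpen_ball
        (mem_ball_self (by linarith)))
    have hlow := hlower x hx1
    have hx2' : liminfS (gradient F) x ≤ ((1 / (lam0 + 1) : ℝ) : EReal) := hx2
    have hcontra : ((1 / lam0 : ℝ) : EReal) ≤ ((1 / (lam0 + 1) : ℝ) : EReal) :=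
      le_trans hlow hx2'
    rw [EReal.coe_le_coe_iff] at hcontra
    have : (1 / (lam0 + 1) : ℝ) < 1 / lam0 :=
      one_div_lt_one_div_of_lt hlam0 (lt_add_one lam0)
    linarith


end
end

section
/- Let G : ℝ² → ℝ² be smooth and strongly monotone (hence a bijection with smooth inverse G⁻¹), and define G*(ξ) = i·G⁻¹(−i·ξ). Then for every Λ > 0 and every ξ ∈ ℝ²: ξ ∈ V_Λ(G) if and only if i·G(ξ) ∈ O_{1/Λ}(G*). -/
open Filter Metric MeasureTheory Topology

noncomputable section

local notation "⟪" x ", " y "⟫" => @inner ℝ ℂ _ x y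

section Aux

private lemma myliminf_map {u : ℂ → EReal} {m : ℂ → ℂ} {F : Filter ℂ} :
    liminf u (Filter.map m F) = liminf (fun z => u (m z)) F := by
  simp only [Filter.liminf_eq, Filter.eventually_map]

private lemma inner_I_mul (a b : ℂ) : ⟪Complex.I * a, Complex.I * b⟫ = ⟪a, b⟫ := by
  have h : (starRingEnd ℂ) (Complex.I * a) * (Complex.I * b) = (starRingEnd ℂ) a * b := by
    rw [map_mul, Complex.conj_I]; ring_nf; rw [Complex.I_sq]; ring
  rw [Complex.inner, Complex.inner, mul_comm (Complex.I * b), h, mul_comm]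

variable {G : ℂ → ℂ} {C : ℝ}

private lemma sm_antilip (hC0 : 0 < C)
    (hC : ∀ ξ ζ : ℂ, ‖ξ - ζ‖ ^ 2 + ‖G ξ - G ζ‖ ^ 2 ≤ C * ⟪G ξ - G ζ, ξ - ζ⟫)
    (ξ ζ : ℂ) : ‖ξ - ζ‖ ≤ C * ‖G ξ - G ζ‖ := by
  rcases eq_or_lt_of_le (norm_nonneg (ξ - ζ)) with h0 | h0
  · rw [← h0]; positivity
  · refine le_of_mul_le_mul_right ?_ h0
    have h1 := hC ξ ζ
    have h2 := real_inner_le_norm (G ξ - G ζ) (ξ - ζ)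
    nlinarith [sq_nonneg ‖G ξ - G ζ‖]

private lemma sm_inj (hC0 : 0 < C)
    (hC : ∀ ξ ζ : ℂ, ‖ξ - ζ‖ ^ 2 + ‖G ξ - G ζ‖ ^ 2 ≤ C * ⟪G ξ - G ζ, ξ - ζ⟫) :
    Function.Injective G := by
  intro a b hab
  have h1 := hC a b
  have h2 : G a - G b = 0 := by rw [hab, sub_self]
  rw [h2] at h1
  simp only [norm_zero, inner_zero_left, mul_zero] at h1
  have h3 : ‖a - b‖ = 0 := by nlinarith [norm_nonneg (a - b)]
  rwa [norm_eq_zero, sub_eq_zero] at h3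

private lemma sm_map_nhds (hG : ContDiff ℝ (⊤ : ℕ∞) G) (hC0 : 0 < C)
    (hC : ∀ ξ ζ : ℂ, ‖ξ - ζ‖ ^ 2 + ‖G ξ - G ζ‖ ^ 2 ≤ C * ⟪G ξ - G ζ, ξ - ζ⟫)
    (x : ℂ) : Filter.map G (𝓝 x) = 𝓝 (G x) := by
  set D := fderiv ℝ G x with hD
  have hdiff : HasFDerivAt G D x := (hG.differentiable (by simp) x).hasFDerivAt
  have hpos : ∀ v : ℂ, ‖v‖ ^ 2 / C ≤ ⟪D v, v⟫ := by
    intro v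
    have h1 : HasDerivAt (fun t : ℝ => x + t • v) v 0 := by
      simpa using ((hasDerivAt_id (0 : ℝ)).smul_const v).const_add x
    have hline : HasDerivAt (fun t : ℝ => G (x + t • v)) (D v) 0 :=
      (by simpa using hdiff : HasFDerivAt G D (x + (0:ℝ) • v)).comp_hasDerivAt 0
        (by simpa using h1)
    have hslope := hasDerivAt_iff_tendsto_slope.mp hline
    have htend : Tendsto (fun t : ℝ => ⟪slope (fun t : ℝ => G (x + t • v)) 0 t, v⟫)
        (𝓝[>] (0:ℝ)) (𝓝 ⟪D v, v⟫) := by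
      exact (hslope.mono_left
        (nhdsWithin_mono 0 fun t ht => ne_of_gt ht)).inner tendsto_const_nhds
    refine ge_of_tendsto htend ?_
    filter_upwards [self_mem_nhdsWithin] with t (ht : (0:ℝ) < t)
    have h1 := hC (x + t • v) x
    rw [add_sub_cancel_left] at h1
    rw [real_inner_smul_right] at h1
    have h4 : ‖t • v‖ ^ 2 = t ^ 2 * ‖v‖ ^ 2 := by
      rw [norm_smul, Real.norm_eq_abs, mul_pow, sq_abs]
    rw [h4] at h1
    have h5 : (0:ℝ) ≤ ‖G (x + t • v) - G x‖ ^ 2 := sq_nonneg _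
    simp only [slope, sub_zero, vsub_eq_sub, zero_smul, add_zero]
    rw [real_inner_smul_left, inv_mul_eq_div, div_le_div_iff₀ hC0 ht]
    nlinarith
  have hDinj : Function.Injective D := by
    intro a b hab
    have h1 : D (a - b) = 0 := by rw [map_sub, hab, sub_self]
    have h2 := hpos (a - b)
    rw [h1] at h2
    simp only [inner_zero_left] at h2
    rw [div_le_iff₀ hC0] at h2
    have h3 : ‖a - b‖ = 0 := by nlinarith [norm_nonneg (a - b)]
    rwa [norm_eq_zero, sub_eq_zero] at h3
  have hDsurj : Function.Surjective D :=
    (LinearMap.injective_iff_surjective (f := (D : ℂ →ₗ[ℝ] ℂ))).mp hDinj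
  set e : ℂ ≃L[ℝ] ℂ := ContinuousLinearEquiv.ofBijective D
    (LinearMap.ker_eq_bot.mpr hDinj) (LinearMap.range_eq_top.mpr hDsurj) with he
  have hcoe : (e : ℂ →L[ℝ] ℂ) = D := by
    rw [he]; rfl
  have hstrict : HasStrictFDerivAt G (e : ℂ →L[ℝ] ℂ) x :=
    hG.contDiffAt.hasStrictFDerivAt' (by rw [hcoe]; exact hdiff) (by simp)
  exact hstrict.map_nhds_eq_of_equiv

private lemma sm_homeo (hG : ContDiff ℝ (⊤ : ℕ∞) G) (hm : StronglyMonotoneField G) :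
    ∃ e : ℂ ≃ₜ ℂ, ⇑e = G := by
  obtain ⟨C, hC0, hC⟩ := hm
  have hinj : Function.Injective G := sm_inj hC0 hC
  have hlipG : LipschitzWith C.toNNReal G := by
    apply LipschitzWith.of_dist_le_mul
    intro a b
    rw [Real.coe_toNNReal C hC0.le, dist_eq_norm, dist_eq_norm]
    rcases eq_or_lt_of_le (norm_nonneg (G a - G b)) with h0 | h0
    · rw [← h0]; positivity
    · refine le_of_mul_le_mul_right ?_ h0
      have h1 := hC a b
      have h2 := real_inner_le_norm (G a - G b) (a - b)
      nlinarith [sq_nonneg ‖a - b‖]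
  have hanti : AntilipschitzWith C.toNNReal G := by
    apply AntilipschitzWith.of_le_mul_dist
    intro a b
    rw [Real.coe_toNNReal C hC0.le, dist_eq_norm, dist_eq_norm]
    exact sm_antilip hC0 hC a b
  have hclosed : IsClosed (Set.range G) := hanti.isClosed_range hlipG.uniformContinuous
  have hopen : IsOpen (Set.range G) := by
    rw [isOpen_iff_mem_nhds]
    rintro _ ⟨x, rfl⟩
    rw [← sm_map_nhds hG hC0 hC x]
    exact Filter.mem_map.2 (Filter.mem_of_superset Filter.univ_mem fun z _ => ⟨z, rfl⟩)
  have hsurj : Function.Surjective G :=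
    Set.range_eq_univ.mp (IsClopen.eq_univ (s := Set.range G) ⟨hclosed, hopen⟩
      ⟨G 0, Set.mem_range_self 0⟩)
  set eqv : ℂ ≃ ℂ := Equiv.ofBijective G ⟨hinj, hsurj⟩ with heqv
  have hlipInv : LipschitzWith C.toNNReal eqv.symm := by
    apply LipschitzWith.of_dist_le_mul
    intro a b
    rw [Real.coe_toNNReal C hC0.le, dist_eq_norm, dist_eq_norm]
    have h := sm_antilip hC0 hC (eqv.symm a) (eqv.symm b)
    have ha : G (eqv.symm a) = a := eqv.apply_symm_apply a
    have hb : G (eqv.symm b) = b := eqv.apply_symm_apply b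
    rwa [ha, hb] at h
  exact ⟨⟨eqv, hG.continuous, hlipInv.continuous⟩, rfl⟩

private lemma liminf_eq_aux (G : ℂ → ℂ) (e : ℂ ≃ₜ ℂ) (he : ⇑e = G) (ξ : ℂ) :
    liminfS G ξ =
      liminfD (fun η => Complex.I * Function.invFun G (-Complex.I * η)) (Complex.I * G ξ) := by
  have hinj : Function.Injective G := he ▸ e.injective
  have hleft : ∀ z : ℂ, Function.invFun G (G z) = z := fun z =>
    Function.leftInverse_invFun hinj z
  set ψ : ℂ ≃ₜ ℂ := ((Homeomorph.addLeft ξ).trans e).trans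
    ((Homeomorph.addRight (-G ξ)).trans
      (Homeomorph.mulLeft₀ Complex.I Complex.I_ne_zero)) with hψdef
  have hψ : ∀ ζ : ℂ, ψ ζ = Complex.I * (G (ξ + ζ) + -G ξ) := by
    intro ζ
    simp only [hψdef, Homeomorph.trans_apply, Homeomorph.coe_addLeft,
      Homeomorph.coe_addRight, he]
    rfl
  have hψ0 : ψ (0 : ℂ) = 0 := by
    rw [hψ 0, add_zero]
    ring
  have hmap : Filter.map (⇑ψ) (𝓝[≠] (0:ℂ)) = 𝓝[≠] (0:ℂ) := by
    rw [Homeomorph.map_punctured_nhds_eq, hψ0]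
  unfold liminfS liminfD
  conv_rhs => rw [← hmap, myliminf_map]
  apply Filter.liminf_congr
  filter_upwards [self_mem_nhdsWithin] with ζ hζ
  have e1 : -Complex.I * (Complex.I * G ξ + ψ ζ) = G (ξ + ζ) := by
    rw [hψ ζ]
    linear_combination (-(G (ξ + ζ))) * Complex.I_mul_I
  have e2 : -Complex.I * (Complex.I * G ξ) = G ξ := by
    linear_combination (-(G ξ)) * Complex.I_mul_I
  have e3 : Complex.I * Function.invFun G (-Complex.I * (Complex.I * G ξ + ψ ζ)) -
      Complex.I * Function.invFun G (-Complex.I * (Complex.I * G ξ)) = Complex.I * ζ := by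
    rw [e1, e2, hleft (ξ + ζ), hleft ξ]
    ring
  have e4 : ⟪Complex.I * Function.invFun G (-Complex.I * (Complex.I * G ξ + ψ ζ)) -
      Complex.I * Function.invFun G (-Complex.I * (Complex.I * G ξ)), ψ ζ⟫
      = ⟪G (ξ + ζ) - G ξ, ζ⟫ := by
    rw [e3, hψ ζ, ← sub_eq_add_neg, inner_I_mul, real_inner_comm]
  have e5 : ‖ψ ζ‖ = ‖G (ξ + ζ) - G ξ‖ := by
    rw [hψ ζ, ← sub_eq_add_neg, norm_mul, Complex.norm_I, one_mul]
  exact congrArg _ (by rw [e4, e5])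


end Aux

theorem stmt11 (G : ℂ → ℂ) (hG : ContDiff ℝ (⊤ : ℕ∞) G) (hm : StronglyMonotoneField G) :
    ∀ Lam : ℝ, 0 < Lam → ∀ ξ : ℂ,
      (ξ ∈ Vset G Lam ↔
        Complex.I * G ξ ∈
          Oset (fun η => Complex.I * Function.invFun G (-Complex.I * η)) (1 / Lam)) := by
  obtain ⟨e, he⟩ := sm_homeo hG hm
  intro Lam _hLam ξ
  set h : ℂ ≃ₜ ℂ := e.trans (Homeomorph.mulLeft₀ Complex.I Complex.I_ne_zero) with hhdef
  have hh : ∀ z : ℂ, h z = Complex.I * G z := by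
    intro z
    simp only [hhdef, Homeomorph.trans_apply, he]
    rfl
  have hset : {z : ℂ | ((1 / Lam : ℝ) : EReal) ≤ liminfS G z}
      = h ⁻¹' {η : ℂ | ((1 / Lam : ℝ) : EReal) ≤
          liminfD (fun η => Complex.I * Function.invFun G (-Complex.I * η)) η} := by
    ext z
    simp only [Set.mem_setOf_eq, Set.mem_preimage, hh z]
    rw [liminf_eq_aux G e he z]
  unfold Vset Oset
  rw [hset, ← Homeomorph.preimage_interior, Set.mem_preimage, hh ξ]


end
end

section
/- Let H : ℂ → ℂ be strictly 1-Lipschitz and satisfy condition (∞). Then the maps F(z) = (H(z) + conj(z))/2 and F_*(z) = (H(z) − conj(z))/(2i) are homeomorphisms of ℂ onto ℂ. -/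
open Filter Metric MeasureTheory Topology

noncomputable section

local notation "⟪" x ", " y "⟫" => @inner ℝ ℂ _ x y

private lemma strictContinuous' {g : ℂ → ℂ}
    (hg : ∀ x y : ℂ, x ≠ y → ‖g x - g y‖ < ‖x - y‖) : Continuous g := by
  have : LipschitzWith 1 g := by
    apply LipschitzWith.of_dist_le_mul
    intro x y
    rcases eq_or_ne x y with rfl | h
    · simp
    · rw [dist_eq_norm, dist_eq_norm]
      simpa using (hg x y h).le
  exact this.continuous

private lemma edelstein' {g : ℂ → ℂ}
    (hg : ∀ x y : ℂ, x ≠ y → ‖g x - g y‖ < ‖x - y‖)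
    (hp : Tendsto (fun w : ℂ => ‖w - g w‖) (Bornology.cobounded ℂ) atTop) :
    ∃ w : ℂ, g w = w := by
  have hc : Continuous g := strictContinuous' hg
  have hΦ : Continuous fun w : ℂ => ‖w - g w‖ := (continuous_id.sub hc).norm
  rw [Metric.cobounded_eq_cocompact] at hp
  obtain ⟨w₀, hw₀⟩ := hΦ.exists_forall_le hp
  refine ⟨w₀, ?_⟩
  by_contra h
  have h1 : ‖g w₀ - g (g w₀)‖ < ‖w₀ - g w₀‖ := hg _ _ (fun e => h e.symm)
  exact absurd (hw₀ (g w₀)) (not_le.mpr h1)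

private lemma key_add' (H : ℂ → ℂ) (z : ℂ) (hz : z ≠ 0) :
    ‖z‖ + ⟪starRingEnd ℂ (H z), z⟫ / ‖z‖ ≤ ‖H z + starRingEnd ℂ z‖ := by
  have hn : (0:ℝ) < ‖z‖ := norm_pos_iff.mpr hz
  have hsq : ‖H z + starRingEnd ℂ z‖ ^ 2
      = ‖H z‖ ^ 2 + 2 * ⟪starRingEnd ℂ (H z), z⟫ + ‖z‖ ^ 2 := by
    rw [norm_add_sq_real, Complex.inner, Complex.inner, RCLike.norm_conj]
    simp [← map_mul, Complex.conj_conj]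
  have hcs : |⟪starRingEnd ℂ (H z), z⟫| ≤ ‖H z‖ * ‖z‖ := by
    simpa [RCLike.norm_conj] using abs_real_inner_le_norm (starRingEnd ℂ (H z)) z
  have h0 : (0:ℝ) ≤ ‖H z + starRingEnd ℂ z‖ := norm_nonneg _
  set t := ⟪starRingEnd ℂ (H z), z⟫
  set a := ‖H z‖; set n := ‖z‖; set s := ‖H z + starRingEnd ℂ z‖
  have key : (n + t / n) ^ 2 ≤ s ^ 2 := by
    have h1 : t ^ 2 / n ^ 2 ≤ a ^ 2 := by
      rw [div_le_iff₀ (by positivity)]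
      nlinarith [abs_nonneg t, sq_abs t]
    have expand : (n + t / n) ^ 2 = n ^ 2 + 2 * t + t ^ 2 / n ^ 2 := by
      field_simp; ring
    nlinarith
  nlinarith [sq_abs (n + t / n), le_abs_self (n + t / n)]

private lemma key_sub' (H : ℂ → ℂ) (z : ℂ) (hz : z ≠ 0) :
    ‖z‖ - ⟪starRingEnd ℂ (H z), z⟫ / ‖z‖ ≤ ‖H z - starRingEnd ℂ z‖ := by
  have hn : (0:ℝ) < ‖z‖ := norm_pos_iff.mpr hz
  have hsq : ‖H z - starRingEnd ℂ z‖ ^ 2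
      = ‖H z‖ ^ 2 - 2 * ⟪starRingEnd ℂ (H z), z⟫ + ‖z‖ ^ 2 := by
    rw [norm_sub_sq_real, Complex.inner, Complex.inner, RCLike.norm_conj]
    simp [← map_mul, Complex.conj_conj]
  have hcs : |⟪starRingEnd ℂ (H z), z⟫| ≤ ‖H z‖ * ‖z‖ := by
    simpa [RCLike.norm_conj] using abs_real_inner_le_norm (starRingEnd ℂ (H z)) z
  have h0 : (0:ℝ) ≤ ‖H z - starRingEnd ℂ z‖ := norm_nonneg _
  set t := ⟪starRingEnd ℂ (H z), z⟫
  set a := ‖H z‖; set n := ‖z‖; set s := ‖H z - starRingEnd ℂ z‖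
  have key : (n - t / n) ^ 2 ≤ s ^ 2 := by
    have h1 : t ^ 2 / n ^ 2 ≤ a ^ 2 := by
      rw [div_le_iff₀ (by positivity)]
      nlinarith [abs_nonneg t, sq_abs t]
    have expand : (n - t / n) ^ 2 = n ^ 2 - 2 * t + t ^ 2 / n ^ 2 := by
      field_simp; ring
    nlinarith
  nlinarith [sq_abs (n - t / n), le_abs_self (n - t / n)]

private lemma homeo_of' {f : ℂ → ℂ} (hc : Continuous f) (hb : Function.Bijective f)
    (hp : Tendsto (fun z => ‖f z‖) (Bornology.cobounded ℂ) atTop) : IsHomeomorph f := by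
  have hp' : Tendsto f (cocompact ℂ) (cocompact ℂ) := by
    rw [← Metric.cobounded_eq_cocompact]
    exact tendsto_norm_atTop_iff_cobounded.mp hp
  have hproper : IsProperMap f := isProperMap_iff_tendsto_cocompact.mpr ⟨hc, hp'⟩
  exact isHomeomorph_iff_continuous_isClosedMap_bijective.mpr ⟨hc, hproper.isClosedMap, hb⟩

theorem stmt14 (H : ℂ → ℂ) (hH : StrictlyOneLipschitz H) (hinf : CondInfty H) :
    IsHomeomorph (Fmap H) ∧ IsHomeomorph (Fstar H) := by
  obtain ⟨hinf1, hinf2⟩ := hinf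
  have hHc : Continuous H := strictContinuous' (fun x y h => hH x y h)
  have hconjc : Continuous (fun z : ℂ => starRingEnd ℂ z) := Complex.continuous_conj
  have ev0 : ∀ᶠ z : ℂ in Bornology.cobounded ℂ, z ≠ 0 :=
    (tendsto_norm_cobounded_atTop.eventually (eventually_gt_atTop 0)).mono
      (fun z hz => norm_pos_iff.mp hz)
  have tF : Tendsto (fun z : ℂ => ‖H z + starRingEnd ℂ z‖) (Bornology.cobounded ℂ) atTop :=
    tendsto_atTop_mono' _ (ev0.mono fun z hz => key_add' H z hz) hinf1
  have tFs : Tendsto (fun z : ℂ => ‖H z - starRingEnd ℂ z‖) (Bornology.cobounded ℂ) atTop :=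
    tendsto_atTop_mono' _ (ev0.mono fun z hz => key_sub' H z hz) hinf2
  have hconj : Tendsto (fun w : ℂ => starRingEnd ℂ w)
      (Bornology.cobounded ℂ) (Bornology.cobounded ℂ) := by
    rw [← tendsto_norm_atTop_iff_cobounded]
    simp only [RCLike.norm_conj]
    exact tendsto_norm_cobounded_atTop
  have hlipconj : ∀ x y : ℂ, x ≠ y →
      ‖H (starRingEnd ℂ x) - H (starRingEnd ℂ y)‖ < ‖x - y‖ := by
    intro x y hxy
    have hcne : starRingEnd ℂ x ≠ starRingEnd ℂ y := fun e =>
      hxy (by simpa using congrArg (starRingEnd ℂ) e)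
    calc ‖H (starRingEnd ℂ x) - H (starRingEnd ℂ y)‖
        < ‖starRingEnd ℂ x - starRingEnd ℂ y‖ := hH _ _ hcne
      _ = ‖x - y‖ := by rw [← map_sub, RCLike.norm_conj]
  constructor
  · -- Fmap
    have injF : Function.Injective (Fmap H) := by
      intro x y hxy
      by_contra hne
      have h2 : H x + starRingEnd ℂ x = H y + starRingEnd ℂ y := by
        have h3 : (H x + starRingEnd ℂ x) / 2 = (H y + starRingEnd ℂ y) / 2 := hxy
        field_simp at h3
        exact h3
      have h4 : H x - H y = starRingEnd ℂ y - starRingEnd ℂ x := by linear_combination h2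
      have hn : ‖H x - H y‖ = ‖x - y‖ := by
        rw [h4, ← map_sub, RCLike.norm_conj, norm_sub_rev]
      exact (hH x y hne).ne hn
    have surF : Function.Surjective (Fmap H) := by
      intro c
      set g : ℂ → ℂ := fun w => 2 * c - H (starRingEnd ℂ w) with hg_def
      have hg : ∀ x y : ℂ, x ≠ y → ‖g x - g y‖ < ‖x - y‖ := by
        intro x y hxy
        have : g x - g y = -(H (starRingEnd ℂ x) - H (starRingEnd ℂ y)) := by
          rw [hg_def]; ring
        rw [this, norm_neg]
        exact hlipconj x y hxy
      have base : Tendsto (fun w : ℂ => ‖H (starRingEnd ℂ w) + w‖)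
          (Bornology.cobounded ℂ) atTop := by
        have h5 := tF.comp hconj
        have he : (fun z : ℂ => ‖H z + starRingEnd ℂ z‖) ∘ (fun w : ℂ => starRingEnd ℂ w)
            = fun w : ℂ => ‖H (starRingEnd ℂ w) + w‖ := by
          funext w; simp [Function.comp, Complex.conj_conj]
        rwa [he] at h5
      have base2 := tendsto_atTop_add_const_right (Bornology.cobounded ℂ) (-‖2*c‖) base
      have hprop : Tendsto (fun w : ℂ => ‖w - g w‖) (Bornology.cobounded ℂ) atTop := by
        refine tendsto_atTop_mono (fun w => ?_) base2
        have heq : w - g w = (H (starRingEnd ℂ w) + w) - 2*c := by rw [hg_def]; ring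
        rw [heq]
        have h6 := norm_sub_norm_le (H (starRingEnd ℂ w) + w) (2*c)
        linarith
      obtain ⟨w, hw⟩ := edelstein' hg hprop
      refine ⟨starRingEnd ℂ w, ?_⟩
      have hz : H (starRingEnd ℂ w) + starRingEnd ℂ (starRingEnd ℂ w) = 2 * c := by
        rw [Complex.conj_conj]
        have : 2 * c - H (starRingEnd ℂ w) = w := hw
        linear_combination -this
      show (H (starRingEnd ℂ w) + starRingEnd ℂ (starRingEnd ℂ w)) / 2 = c
      rw [hz]; ring
    have hcF : Continuous (Fmap H) := (hHc.add hconjc).div_const 2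
    have hpF : Tendsto (fun z => ‖Fmap H z‖) (Bornology.cobounded ℂ) atTop := by
      have : ∀ z : ℂ, ‖Fmap H z‖ = ‖H z + starRingEnd ℂ z‖ / 2 := by
        intro z
        show ‖(H z + starRingEnd ℂ z) / 2‖ = _
        rw [norm_div]
        norm_num
      simp only [this]
      exact tF.atTop_div_const (by norm_num)
    exact homeo_of' hcF ⟨injF, surF⟩ hpF
  · -- Fstar
    have h2I : (2 * Complex.I) ≠ 0 := by simp [Complex.I_ne_zero]
    have injF : Function.Injective (Fstar H) := by
      intro x y hxy
      by_contra hne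
      have h2 : H x - starRingEnd ℂ x = H y - starRingEnd ℂ y := by
        have h3 : (H x - starRingEnd ℂ x) / (2 * Complex.I)
            = (H y - starRingEnd ℂ y) / (2 * Complex.I) := hxy
        field_simp at h3
        exact h3
      have h4 : H x - H y = starRingEnd ℂ x - starRingEnd ℂ y := by linear_combination h2
      have hn : ‖H x - H y‖ = ‖x - y‖ := by
        rw [h4, ← map_sub, RCLike.norm_conj]
      exact (hH x y hne).ne hn
    have surF : Function.Surjective (Fstar H) := by
      intro c
      set c' : ℂ := 2 * Complex.I * c with hc'_def
      set g : ℂ → ℂ := fun w => H (starRingEnd ℂ w) - c' with hg_def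
      have hg : ∀ x y : ℂ, x ≠ y → ‖g x - g y‖ < ‖x - y‖ := by
        intro x y hxy
        have : g x - g y = H (starRingEnd ℂ x) - H (starRingEnd ℂ y) := by
          rw [hg_def]; ring
        rw [this]
        exact hlipconj x y hxy
      have base : Tendsto (fun w : ℂ => ‖H (starRingEnd ℂ w) - w‖)
          (Bornology.cobounded ℂ) atTop := by
        have h5 := tFs.comp hconj
        have he : (fun z : ℂ => ‖H z - starRingEnd ℂ z‖) ∘ (fun w : ℂ => starRingEnd ℂ w)
            = fun w : ℂ => ‖H (starRingEnd ℂ w) - w‖ := by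
          funext w; simp [Function.comp, Complex.conj_conj]
        rwa [he] at h5
      have base2 := tendsto_atTop_add_const_right (Bornology.cobounded ℂ) (-‖c'‖) base
      have hprop : Tendsto (fun w : ℂ => ‖w - g w‖) (Bornology.cobounded ℂ) atTop := by
        refine tendsto_atTop_mono (fun w => ?_) base2
        have heq : w - g w = -((H (starRingEnd ℂ w) - w) - c') := by rw [hg_def]; ring
        rw [heq, norm_neg]
        have h6 := norm_sub_norm_le (H (starRingEnd ℂ w) - w) c'
        linarith
      obtain ⟨w, hw⟩ := edelstein' hg hprop
      refine ⟨starRingEnd ℂ w, ?_⟩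
      have hz : H (starRingEnd ℂ w) - starRingEnd ℂ (starRingEnd ℂ w) = c' := by
        rw [Complex.conj_conj]
        have : H (starRingEnd ℂ w) - c' = w := hw
        linear_combination this
      show (H (starRingEnd ℂ w) - starRingEnd ℂ (starRingEnd ℂ w)) / (2 * Complex.I) = c
      rw [hz, hc'_def]
      field_simp
    have hcF : Continuous (Fstar H) := (hHc.sub hconjc).div_const (2 * Complex.I)
    have hpF : Tendsto (fun z => ‖Fstar H z‖) (Bornology.cobounded ℂ) atTop := by
      have hnorm : ∀ z : ℂ, ‖Fstar H z‖ = ‖H z - starRingEnd ℂ z‖ / 2 := by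
        intro z
        show ‖(H z - starRingEnd ℂ z) / (2 * Complex.I)‖ = _
        rw [norm_div]
        simp [Complex.norm_I]
      simp only [hnorm]
      exact tFs.atTop_div_const (by norm_num)
    exact homeo_of' hcF ⟨injF, surF⟩ hpF


end
end

section
/- Let H : ℂ → ℂ be strictly 1-Lipschitz and satisfy condition (∞), let F, F_* be the associated homeomorphisms of ℂ, and let G = −i·(F_* ∘ F⁻¹), G* = i·(F ∘ F_*⁻¹) be the associated continuous strictly monotone vector fields. Then D(G) = F(Γ₊), S(G) = F(Γ₋), D(G*) = F_*(Γ₋), and S(G*) = F_*(Γ₊). -/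
open Filter Metric MeasureTheory Topology

noncomputable section

local notation "⟪" x ", " y "⟫" => @inner ℝ ℂ _ x y

/-- The dual field G = −i·(F_* ∘ F⁻¹) associated to H. -/
def dualG (H : ℂ → ℂ) (ξ : ℂ) : ℂ :=
  -Complex.I * Fstar H (Function.invFun (Fmap H) ξ)

/-- The dual field G* = i·(F ∘ F_*⁻¹) associated to H. -/
def dualGstar (H : ℂ → ℂ) (ξ : ℂ) : ℂ :=
  Complex.I * Fmap H (Function.invFun (Fstar H) ξ)


section AuxLemmas

open ComplexConjugate

lemma aux_inner_c (x y : ℂ) : ⟪x, y⟫ = x.re * y.re + x.im * y.im := by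
  rw [Complex.inner]; simp [Complex.mul_re]; ring

lemma aux_normsq_c (z : ℂ) : ‖z‖^2 = z.re^2 + z.im^2 := by
  rw [← Complex.normSq_eq_norm_sq, Complex.normSq_apply]; ring

lemma aux_h1 (a c : ℂ) : ⟪-((a - c)/2), (a + c)/2⟫ = (‖c‖^2 - ‖a‖^2)/4 := by
  simp only [aux_inner_c, aux_normsq_c, Complex.div_re, Complex.div_im, Complex.neg_re,
    Complex.neg_im, Complex.sub_re, Complex.sub_im, Complex.add_re, Complex.add_im,
    Complex.normSq_apply, Complex.re_ofNat, Complex.im_ofNat]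
  ring

lemma aux_h2 (a c : ℂ) : ⟪Complex.I*((a + c)/2), (a - c)/(2*Complex.I)⟫ = (‖c‖^2 - ‖a‖^2)/4 := by
  simp only [aux_inner_c, aux_normsq_c, Complex.div_re, Complex.div_im, Complex.mul_re,
    Complex.mul_im, Complex.sub_re, Complex.sub_im, Complex.add_re, Complex.add_im,
    Complex.normSq_apply, Complex.re_ofNat, Complex.im_ofNat, Complex.I_re, Complex.I_im]
  ring

lemma aux_norm2 : ‖(2:ℂ)‖ = 2 := RCLike.norm_two

lemma aux_norm2I : ‖2*Complex.I‖ = 2 := by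
  rw [norm_mul, Complex.norm_I, aux_norm2, mul_one]

lemma aux_real (A C P : ℝ) (hC : C ≠ 0) (hP : P ≠ 0) :
    ((C^2 - A^2)/4) / (P/2)^2 = (1 - (A/C)^2) / (P/C)^2 := by
  field_simp
  ring

lemma aux_addne (a c : ℂ) (ha : ‖a‖ < ‖c‖) : a + c ≠ 0 := by
  intro h
  rw [eq_neg_of_add_eq_zero_left h, norm_neg] at ha
  exact lt_irrefl _ ha

lemma aux_subne (a c : ℂ) (ha : ‖a‖ < ‖c‖) : a - c ≠ 0 := by
  intro h
  rw [sub_eq_zero.mp h] at ha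
  exact lt_irrefl _ ha

lemma aux_keyD (a c : ℂ) (hc : c ≠ 0) (ha : ‖a‖ < ‖c‖) :
    (⟪-((a - c)/2), (a + c)/2⟫ / ‖(a + c)/2‖^2 : ℝ) = (1 - ‖a / c‖^2)/‖1 + a / c‖^2 := by
  have hC : ‖c‖ ≠ 0 := norm_ne_zero_iff.mpr hc
  have hP : ‖a + c‖ ≠ 0 := norm_ne_zero_iff.mpr (aux_addne a c ha)
  have e1 : 1 + a / c = (a + c)/c := by rw [add_div, div_self hc, add_comm]
  rw [aux_h1, e1, norm_div, norm_div, norm_div, aux_norm2]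
  exact aux_real _ _ _ hC hP

lemma aux_keyS (a c : ℂ) (hc : c ≠ 0) (ha : ‖a‖ < ‖c‖) :
    (⟪-((a - c)/2), (a + c)/2⟫ / ‖-((a - c)/2)‖^2 : ℝ) = (1 - ‖a / c‖^2)/‖1 - a / c‖^2 := by
  have hC : ‖c‖ ≠ 0 := norm_ne_zero_iff.mpr hc
  have hP : ‖a - c‖ ≠ 0 := norm_ne_zero_iff.mpr (aux_subne a c ha)
  have e1 : 1 - a / c = (c - a)/c := by rw [sub_div, div_self hc]
  have e2 : ‖c - a‖ = ‖a - c‖ := norm_sub_rev c a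
  rw [aux_h1, e1, norm_neg, norm_div, norm_div, norm_div, e2, aux_norm2]
  exact aux_real _ _ _ hC hP

lemma aux_keyDstar (a c : ℂ) (hc : c ≠ 0) (ha : ‖a‖ < ‖c‖) :
    (⟪Complex.I*((a + c)/2), (a - c)/(2*Complex.I)⟫ / ‖(a - c)/(2*Complex.I)‖^2 : ℝ)
      = (1 - ‖a / c‖^2)/‖1 - a / c‖^2 := by
  have hC : ‖c‖ ≠ 0 := norm_ne_zero_iff.mpr hc
  have hP : ‖a - c‖ ≠ 0 := norm_ne_zero_iff.mpr (aux_subne a c ha)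
  have e1 : 1 - a / c = (c - a)/c := by rw [sub_div, div_self hc]
  have e2 : ‖c - a‖ = ‖a - c‖ := norm_sub_rev c a
  rw [aux_h2, e1, norm_div, norm_div, norm_div, e2, aux_norm2I]
  exact aux_real _ _ _ hC hP

lemma aux_keySstar (a c : ℂ) (hc : c ≠ 0) (ha : ‖a‖ < ‖c‖) :
    (⟪Complex.I*((a + c)/2), (a - c)/(2*Complex.I)⟫ / ‖Complex.I*((a + c)/2)‖^2 : ℝ)
      = (1 - ‖a / c‖^2)/‖1 + a / c‖^2 := by
  have hC : ‖c‖ ≠ 0 := norm_ne_zero_iff.mpr hc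
  have hP : ‖a + c‖ ≠ 0 := norm_ne_zero_iff.mpr (aux_addne a c ha)
  have e1 : 1 + a / c = (a + c)/c := by rw [add_div, div_self hc, add_comm]
  rw [aux_h2, e1, norm_mul, Complex.norm_I, one_mul, norm_div, norm_div, norm_div, aux_norm2]
  exact aux_real _ _ _ hC hP

variable {H : ℂ → ℂ}

lemma aux_lip (hH : StrictlyOneLipschitz H) (ξ ζ : ℂ) : ‖H ξ - H ζ‖ ≤ ‖ξ - ζ‖ := by
  rcases eq_or_ne ξ ζ with rfl | h
  · simp
  · exact (hH ξ ζ h).le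

lemma aux_contH (hH : StrictlyOneLipschitz H) : Continuous H := by
  have : LipschitzWith 1 H := by
    apply LipschitzWith.of_dist_le_mul
    intro x y
    simpa [dist_eq_norm] using aux_lip hH x y
  exact this.continuous

lemma aux_contF (hH : StrictlyOneLipschitz H) : Continuous (Fmap H) :=
  ((aux_contH hH).add Complex.continuous_conj).div_const 2

lemma aux_contFs (hH : StrictlyOneLipschitz H) : Continuous (Fstar H) :=
  ((aux_contH hH).sub Complex.continuous_conj).div_const (2 * Complex.I)

lemma aux_strict (hH : StrictlyOneLipschitz H) (ξ ζ : ℂ) (hζ : ζ ≠ 0) :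
    ‖H (ξ + ζ) - H ξ‖ < ‖ζ‖ := by
  have h := hH (ξ + ζ) ξ (by simpa using hζ)
  simpa using h

lemma aux_injF (hH : StrictlyOneLipschitz H) : Function.Injective (Fmap H) := by
  intro z w h
  by_contra hzw
  have h2 : H z + starRingEnd ℂ z = H w + starRingEnd ℂ w := by
    have := h; unfold Fmap at this; field_simp at this; exact this
  have h3 : H z - H w = starRingEnd ℂ (w - z) := by
    rw [map_sub]; linear_combination h2
  have h4 : ‖H z - H w‖ = ‖z - w‖ := by
    rw [h3, RCLike.norm_conj, norm_sub_rev]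
  exact absurd h4 (ne_of_lt (hH z w hzw))

lemma aux_injFs (hH : StrictlyOneLipschitz H) : Function.Injective (Fstar H) := by
  intro z w h
  by_contra hzw
  have h2 : H z - starRingEnd ℂ z = H w - starRingEnd ℂ w := by
    have := h; unfold Fstar at this
    field_simp [Complex.I_ne_zero] at this; exact this
  have h3 : H z - H w = starRingEnd ℂ (z - w) := by
    rw [map_sub]; linear_combination h2
  have h4 : ‖H z - H w‖ = ‖z - w‖ := by rw [h3, RCLike.norm_conj]
  exact absurd h4 (ne_of_lt (hH z w hzw))

lemma aux_innF (z : ℂ) : ⟪Fmap H z, starRingEnd ℂ z⟫ = (‖z‖^2 + ⟪starRingEnd ℂ (H z), z⟫)/2 := by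
  simp only [aux_inner_c, Fmap, aux_normsq_c, Complex.div_re, Complex.div_im, Complex.add_re,
    Complex.add_im, Complex.conj_re, Complex.conj_im, Complex.normSq_apply,
    Complex.re_ofNat, Complex.im_ofNat]
  ring

lemma aux_innFs (z : ℂ) :
    ⟪Fstar H z, Complex.I * starRingEnd ℂ z⟫ = (‖z‖^2 - ⟪starRingEnd ℂ (H z), z⟫)/2 := by
  simp only [aux_inner_c, Fstar, aux_normsq_c, Complex.div_re, Complex.div_im, Complex.sub_re,
    Complex.sub_im, Complex.mul_re, Complex.mul_im, Complex.conj_re, Complex.conj_im,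
    Complex.normSq_apply, Complex.re_ofNat, Complex.im_ofNat, Complex.I_re, Complex.I_im]
  ring

lemma aux_lbF (z : ℂ) (hz : z ≠ 0) :
    (‖z‖ + ⟪starRingEnd ℂ (H z), z⟫ / ‖z‖)/2 ≤ ‖Fmap H z‖ := by
  have hz0 : (0:ℝ) < ‖z‖ := norm_pos_iff.mpr hz
  have hcs : ⟪Fmap H z, starRingEnd ℂ z⟫ ≤ ‖Fmap H z‖ * ‖z‖ := by
    have := real_inner_le_norm (Fmap H z) (starRingEnd ℂ z)
    rwa [RCLike.norm_conj] at this
  rw [aux_innF] at hcs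
  have key : ‖z‖ + ⟪starRingEnd ℂ (H z), z⟫ / ‖z‖
      = (‖z‖^2 + ⟪starRingEnd ℂ (H z), z⟫)/‖z‖ := by
    have hz2 : ‖z‖ ≠ 0 := by simpa using hz
    field_simp [hz2]
  rw [div_le_iff₀ two_pos, key, div_le_iff₀ hz0]
  nlinarith [hcs]

lemma aux_lbFs (z : ℂ) (hz : z ≠ 0) :
    (‖z‖ - ⟪starRingEnd ℂ (H z), z⟫ / ‖z‖)/2 ≤ ‖Fstar H z‖ := by
  have hz0 : (0:ℝ) < ‖z‖ := norm_pos_iff.mpr hz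
  have hcs : ⟪Fstar H z, Complex.I * starRingEnd ℂ z⟫ ≤ ‖Fstar H z‖ * ‖z‖ := by
    have := real_inner_le_norm (Fstar H z) (Complex.I * starRingEnd ℂ z)
    rwa [norm_mul, Complex.norm_I, one_mul, RCLike.norm_conj] at this
  rw [aux_innFs] at hcs
  have key : ‖z‖ - ⟪starRingEnd ℂ (H z), z⟫ / ‖z‖
      = (‖z‖^2 - ⟪starRingEnd ℂ (H z), z⟫)/‖z‖ := by
    have hz2 : ‖z‖ ≠ 0 := by simpa using hz
    field_simp [hz2]
  rw [div_le_iff₀ two_pos, key, div_le_iff₀ hz0]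
  nlinarith [hcs]

lemma aux_coF (hinf : CondInfty H) :
    Tendsto (fun z : ℂ => ‖Fmap H z‖) (Bornology.cobounded ℂ) atTop := by
  apply tendsto_atTop_mono' _ _ ((hinf.1).atTop_div_const two_pos)
  filter_upwards [eventually_cobounded_le_norm (1:ℝ)] with z hz
  exact aux_lbF z (by intro h; rw [h] at hz; simp at hz; linarith)

lemma aux_coFs (hinf : CondInfty H) :
    Tendsto (fun z : ℂ => ‖Fstar H z‖) (Bornology.cobounded ℂ) atTop := by
  apply tendsto_atTop_mono' _ _ ((hinf.2).atTop_div_const two_pos)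
  filter_upwards [eventually_cobounded_le_norm (1:ℝ)] with z hz
  exact aux_lbFs z (by intro h; rw [h] at hz; simp at hz; linarith)

lemma aux_exists_min {F : ℂ → ℂ} (hc : Continuous F) (w : ℂ)
    (hco : Tendsto (fun z => ‖F z‖) (Bornology.cobounded ℂ) atTop) :
    ∃ z₀ : ℂ, ∀ z : ℂ, ‖F z₀ - w‖ ≤ ‖F z - w‖ := by
  have hcont : Continuous fun z => ‖F z - w‖ := (hc.sub continuous_const).norm
  have hten : Tendsto (fun z => ‖F z - w‖) (cocompact ℂ) atTop := by
    rw [← cobounded_eq_cocompact]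
    apply tendsto_atTop_mono' _ _ (tendsto_atTop_add_const_right _ (-‖w‖) hco)
    filter_upwards with z
    have := norm_sub_norm_le (F z) w
    linarith
  exact hcont.exists_forall_le hten

lemma aux_Fmap_sub (z w : ℂ) :
    Fmap H z - Fmap H w = ((H z - H w) + starRingEnd ℂ (z - w))/2 := by
  simp only [Fmap, map_sub]; ring

lemma aux_Fstar_sub (z w : ℂ) :
    Fstar H z - Fstar H w = ((H z - H w) - starRingEnd ℂ (z - w))/(2*Complex.I) := by
  simp only [Fstar, map_sub]; ring

lemma aux_negI_div (X : ℂ) : -Complex.I * (X/(2*Complex.I)) = -(X/2) := by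
  field_simp

lemma aux_surjF (hH : StrictlyOneLipschitz H) (hinf : CondInfty H) :
    Function.Surjective (Fmap H) := by
  intro w
  obtain ⟨z₀, hz₀⟩ := aux_exists_min (aux_contF hH) w (aux_coF hinf)
  refine ⟨z₀, ?_⟩
  by_contra hne
  set c := w - Fmap H z₀ with hc
  have hc0 : c ≠ 0 := sub_ne_zero.mpr (Ne.symm hne)
  have hcc : starRingEnd ℂ c ≠ 0 := by simpa using hc0
  have hΔ : ‖H (z₀ + starRingEnd ℂ c) - H z₀‖ < ‖c‖ := by
    have := aux_strict hH z₀ (starRingEnd ℂ c) hcc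
    rwa [RCLike.norm_conj] at this
  have e : Fmap H (z₀ + starRingEnd ℂ c) - Fmap H z₀
      = ((H (z₀ + starRingEnd ℂ c) - H z₀) + c)/2 := by
    rw [aux_Fmap_sub, add_sub_cancel_left, Complex.conj_conj]
  have hF : Fmap H (z₀ + starRingEnd ℂ c) - w
      = (H (z₀ + starRingEnd ℂ c) - H z₀)/2 - c/2 := by
    have hw : w = Fmap H z₀ + c := by rw [hc]; ring
    rw [hw]
    linear_combination e
  have hlt : ‖Fmap H (z₀ + starRingEnd ℂ c) - w‖ < ‖c‖ := by
    rw [hF]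
    calc ‖(H (z₀ + starRingEnd ℂ c) - H z₀)/2 - c/2‖
        ≤ ‖(H (z₀ + starRingEnd ℂ c) - H z₀)/2‖ + ‖c/2‖ := norm_sub_le _ _
      _ = ‖H (z₀ + starRingEnd ℂ c) - H z₀‖/2 + ‖c‖/2 := by
          rw [norm_div, norm_div, aux_norm2]
      _ < ‖c‖ := by linarith
  have h0 : ‖Fmap H z₀ - w‖ = ‖c‖ := by rw [hc, norm_sub_rev]
  have := hz₀ (z₀ + starRingEnd ℂ c)
  rw [h0] at this
  linarith

lemma aux_surjFs (hH : StrictlyOneLipschitz H) (hinf : CondInfty H) :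
    Function.Surjective (Fstar H) := by
  intro w
  obtain ⟨z₀, hz₀⟩ := aux_exists_min (aux_contFs hH) w (aux_coFs hinf)
  refine ⟨z₀, ?_⟩
  by_contra hne
  set c := w - Fstar H z₀ with hc
  have hc0 : c ≠ 0 := sub_ne_zero.mpr (Ne.symm hne)
  have hcc : Complex.I * starRingEnd ℂ c ≠ 0 :=
    mul_ne_zero Complex.I_ne_zero (by simpa using hc0)
  have hΔ : ‖H (z₀ + Complex.I * starRingEnd ℂ c) - H z₀‖ < ‖c‖ := by
    have := aux_strict hH z₀ (Complex.I * starRingEnd ℂ c) hcc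
    rwa [norm_mul, Complex.norm_I, one_mul, RCLike.norm_conj] at this
  have e : Fstar H (z₀ + Complex.I * starRingEnd ℂ c) - Fstar H z₀
      = ((H (z₀ + Complex.I * starRingEnd ℂ c) - H z₀) + Complex.I * c)/(2*Complex.I) := by
    rw [aux_Fstar_sub, add_sub_cancel_left, map_mul, Complex.conj_I, Complex.conj_conj]
    ring_nf
  have hF : Fstar H (z₀ + Complex.I * starRingEnd ℂ c) - w
      = (H (z₀ + Complex.I * starRingEnd ℂ c) - H z₀)/(2*Complex.I) - c/2 := by
    have hw : w = Fstar H z₀ + c := by rw [hc]; ring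
    rw [hw]
    have e2 : ((H (z₀ + Complex.I * starRingEnd ℂ c) - H z₀) + Complex.I * c)/(2*Complex.I)
        = (H (z₀ + Complex.I * starRingEnd ℂ c) - H z₀)/(2*Complex.I) + c/2 := by
      field_simp
    linear_combination e + e2
  have hlt : ‖Fstar H (z₀ + Complex.I * starRingEnd ℂ c) - w‖ < ‖c‖ := by
    rw [hF]
    calc ‖(H (z₀ + Complex.I * starRingEnd ℂ c) - H z₀)/(2*Complex.I) - c/2‖
        ≤ ‖(H (z₀ + Complex.I * starRingEnd ℂ c) - H z₀)/(2*Complex.I)‖ + ‖c/2‖ :=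
          norm_sub_le _ _
      _ = ‖H (z₀ + Complex.I * starRingEnd ℂ c) - H z₀‖/2 + ‖c‖/2 := by
          rw [norm_div, norm_div, aux_norm2, aux_norm2I]
      _ < ‖c‖ := by linarith
  have h0 : ‖Fstar H z₀ - w‖ = ‖c‖ := by rw [hc, norm_sub_rev]
  have := hz₀ (z₀ + Complex.I * starRingEnd ℂ c)
  rw [h0] at this
  linarith

noncomputable def auxHomeo {F : ℂ → ℂ} (hc : Continuous F) (hb : Function.Bijective F)
    (hp : Tendsto F (cocompact ℂ) (cocompact ℂ)) : ℂ ≃ₜ ℂ where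
  toEquiv := Equiv.ofBijective F hb
  continuous_toFun := hc
  continuous_invFun := by
    have hproper : IsProperMap F := isProperMap_iff_tendsto_cocompact.mpr ⟨hc, hp⟩
    have hclosed := hproper.isClosedMap
    rw [continuous_iff_isClosed]
    intro s hs
    show IsClosed (⇑(Equiv.ofBijective F hb).symm ⁻¹' s)
    rw [((Equiv.ofBijective F hb).image_eq_preimage_symm s).symm]
    exact hclosed s hs

lemma aux_liminf (e : ℂ ≃ₜ ℂ) (ξ : ℂ) (f g : ℂ → EReal)
    (h : ∀ ζ : ℂ, ζ ≠ 0 → f (e (ξ + ζ) - e ξ) = g ζ) :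
    Filter.liminf f (𝓝[≠] (0:ℂ)) = Filter.liminf g (𝓝[≠] (0:ℂ)) := by
  let φ : ℂ ≃ₜ ℂ := (Homeomorph.addLeft ξ).trans (e.trans (Homeomorph.addRight (-e ξ)))
  have hφ : ∀ ζ : ℂ, φ ζ = e (ξ + ζ) - e ξ := fun ζ => by
    simp [φ, sub_eq_add_neg]
  have hmap : Filter.map φ (𝓝[≠] (0:ℂ)) = 𝓝[≠] (0:ℂ) := by
    have h0 : φ 0 = 0 := by rw [hφ]; simp
    have := φ.map_punctured_nhds_eq 0
    rwa [h0] at this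
  conv_lhs => rw [← hmap, ← Filter.liminf_comp]
  apply Filter.liminf_congr
  filter_upwards [self_mem_nhdsWithin] with ζ hζ
  show f (φ ζ) = g ζ
  rw [hφ]
  exact h ζ hζ

lemma aux_sets (e : ℂ ≃ₜ ℂ) (p q : ℂ → EReal) (h : ∀ ξ, p (e ξ) = q ξ) :
    (⋂ lam > (0:ℝ), closure {x : ℂ | p x ≤ (lam : EReal)}) =
      ⇑e '' ⋂ lam > (0:ℝ), closure {ξ : ℂ | q ξ ≤ (lam : EReal)} := by
  rw [Set.image_iInter₂ e.bijective]
  refine Set.iInter₂_congr fun lam _ => ?_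
  rw [Homeomorph.image_closure]
  have : {x : ℂ | p x ≤ (lam : EReal)} = ⇑e '' {ξ : ℂ | q ξ ≤ (lam : EReal)} := by
    ext x
    simp only [Set.mem_image, Set.mem_setOf_eq]
    constructor
    · intro hx
      refine ⟨e.symm x, ?_, e.apply_symm_apply x⟩
      have h2 := h (e.symm x)
      rw [e.apply_symm_apply] at h2
      rwa [← h2]
    · rintro ⟨ξ, hξ, rfl⟩
      rw [h]
      exact hξ
  rw [this]

lemma aux_inv_iInter (s : ℝ → Set ℂ) : (⋂ L > (0:ℝ), s (1/L)) = ⋂ l > (0:ℝ), s l := by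
  ext x
  simp only [Set.mem_iInter]
  constructor
  · intro h l hl
    have := h (1/l) (by positivity)
    rwa [one_div_one_div] at this
  · intro h L hL
    exact h (1/L) (by positivity)

end AuxLemmas

theorem stmt16 (H : ℂ → ℂ) (hH : StrictlyOneLipschitz H) (hinf : CondInfty H) :
    Dset (dualG H) = Fmap H '' GammaP H ∧ Sset (dualG H) = Fmap H '' GammaM H ∧
    Dset (dualGstar H) = Fstar H '' GammaM H ∧
    Sset (dualGstar H) = Fstar H '' GammaP H := by
  have hbF : Function.Bijective (Fmap H) := ⟨aux_injF hH, aux_surjF hH hinf⟩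
  have hbFs : Function.Bijective (Fstar H) := ⟨aux_injFs hH, aux_surjFs hH hinf⟩
  have hpF : Tendsto (Fmap H) (cocompact ℂ) (cocompact ℂ) := by
    have h1 : Tendsto (Fmap H) (Bornology.cobounded ℂ) (Bornology.cobounded ℂ) :=
      tendsto_norm_atTop_iff_cobounded.mp (aux_coF hinf)
    rwa [cobounded_eq_cocompact] at h1
  have hpFs : Tendsto (Fstar H) (cocompact ℂ) (cocompact ℂ) := by
    have h1 : Tendsto (Fstar H) (Bornology.cobounded ℂ) (Bornology.cobounded ℂ) :=
      tendsto_norm_atTop_iff_cobounded.mp (aux_coFs hinf)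
    rwa [cobounded_eq_cocompact] at h1
  let eF : ℂ ≃ₜ ℂ := auxHomeo (aux_contF hH) hbF hpF
  have heF : ⇑eF = Fmap H := rfl
  let eFs : ℂ ≃ₜ ℂ := auxHomeo (aux_contFs hH) hbFs hpFs
  have heFs : ⇑eFs = Fstar H := rfl
  have hdG : ∀ w, dualG H (Fmap H w) = -Complex.I * Fstar H w := fun w => by
    unfold dualG
    rw [Function.leftInverse_invFun hbF.1 w]
  have hdGs : ∀ w, dualGstar H (Fstar H w) = Complex.I * Fmap H w := fun w => by
    unfold dualGstar
    rw [Function.leftInverse_invFun hbFs.1 w]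
  -- common setup for pointwise identities
  have hsetup : ∀ ξ ζ : ℂ, ζ ≠ 0 →
      (starRingEnd ℂ ζ ≠ 0) ∧ ‖H (ξ + ζ) - H ξ‖ < ‖starRingEnd ℂ ζ‖ := by
    intro ξ ζ hζ
    refine ⟨by simpa using hζ, ?_⟩
    rw [RCLike.norm_conj]
    exact aux_strict hH ξ ζ hζ
  have hincF : ∀ ξ ζ : ℂ,
      eF (ξ + ζ) - eF ξ = ((H (ξ + ζ) - H ξ) + starRingEnd ℂ ζ)/2 := by
    intro ξ ζ
    rw [heF, aux_Fmap_sub, add_sub_cancel_left]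
  have hincFs : ∀ ξ ζ : ℂ,
      eFs (ξ + ζ) - eFs ξ = ((H (ξ + ζ) - H ξ) - starRingEnd ℂ ζ)/(2*Complex.I) := by
    intro ξ ζ
    rw [heFs, aux_Fstar_sub, add_sub_cancel_left]
  have hGdiff : ∀ ξ ζ : ℂ,
      dualG H (eF ξ + (eF (ξ + ζ) - eF ξ)) - dualG H (eF ξ)
        = -(((H (ξ + ζ) - H ξ) - starRingEnd ℂ ζ)/2) := by
    intro ξ ζ
    have hre : eF ξ + (eF (ξ + ζ) - eF ξ) = eF (ξ + ζ) := by ring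
    rw [hre, heF, hdG, hdG,
      show -Complex.I * Fstar H (ξ + ζ) - -Complex.I * Fstar H ξ
        = -Complex.I * (Fstar H (ξ + ζ) - Fstar H ξ) by ring,
      aux_Fstar_sub, add_sub_cancel_left, aux_negI_div]
  have hGsdiff : ∀ ξ ζ : ℂ,
      dualGstar H (eFs ξ + (eFs (ξ + ζ) - eFs ξ)) - dualGstar H (eFs ξ)
        = Complex.I * (((H (ξ + ζ) - H ξ) + starRingEnd ℂ ζ)/2) := by
    intro ξ ζ
    have hre : eFs ξ + (eFs (ξ + ζ) - eFs ξ) = eFs (ξ + ζ) := by ring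
    rw [hre, heFs, hdGs, hdGs,
      show Complex.I * Fmap H (ξ + ζ) - Complex.I * Fmap H ξ
        = Complex.I * (Fmap H (ξ + ζ) - Fmap H ξ) by ring,
      aux_Fmap_sub, add_sub_cancel_left]
  -- the four liminf identities
  have hD : ∀ ξ : ℂ, liminfD (dualG H) (eF ξ) =
      liminf (fun ζ : ℂ =>
        (((1 - ‖LH H ξ ζ‖ ^ 2) / ‖1 + LH H ξ ζ‖ ^ 2 : ℝ) : EReal)) (𝓝[≠] 0) := by
    intro ξ
    unfold liminfD
    apply aux_liminf eF ξ
    intro ζ hζ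
    obtain ⟨hc, ha⟩ := hsetup ξ ζ hζ
    show ((⟪dualG H (eF ξ + (eF (ξ + ζ) - eF ξ)) - dualG H (eF ξ), eF (ξ + ζ) - eF ξ⟫
        / ‖eF (ξ + ζ) - eF ξ‖ ^ 2 : ℝ) : EReal) = _
    rw [hGdiff, hincF]
    exact congrArg (fun r : ℝ => (r : EReal)) (aux_keyD _ _ hc ha)
  have hS : ∀ ξ : ℂ, liminfS (dualG H) (eF ξ) =
      liminf (fun ζ : ℂ =>
        (((1 - ‖LH H ξ ζ‖ ^ 2) / ‖1 - LH H ξ ζ‖ ^ 2 : ℝ) : EReal)) (𝓝[≠] 0) := by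
    intro ξ
    unfold liminfS
    apply aux_liminf eF ξ
    intro ζ hζ
    obtain ⟨hc, ha⟩ := hsetup ξ ζ hζ
    show ((⟪dualG H (eF ξ + (eF (ξ + ζ) - eF ξ)) - dualG H (eF ξ), eF (ξ + ζ) - eF ξ⟫
        / ‖dualG H (eF ξ + (eF (ξ + ζ) - eF ξ)) - dualG H (eF ξ)‖ ^ 2 : ℝ) : EReal) = _
    rw [hGdiff, hincF]
    exact congrArg (fun r : ℝ => (r : EReal)) (aux_keyS _ _ hc ha)
  have hDs : ∀ ξ : ℂ, liminfD (dualGstar H) (eFs ξ) =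
      liminf (fun ζ : ℂ =>
        (((1 - ‖LH H ξ ζ‖ ^ 2) / ‖1 - LH H ξ ζ‖ ^ 2 : ℝ) : EReal)) (𝓝[≠] 0) := by
    intro ξ
    unfold liminfD
    apply aux_liminf eFs ξ
    intro ζ hζ
    obtain ⟨hc, ha⟩ := hsetup ξ ζ hζ
    show ((⟪dualGstar H (eFs ξ + (eFs (ξ + ζ) - eFs ξ)) - dualGstar H (eFs ξ),
        eFs (ξ + ζ) - eFs ξ⟫ / ‖eFs (ξ + ζ) - eFs ξ‖ ^ 2 : ℝ) : EReal) = _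
    rw [hGsdiff, hincFs]
    exact congrArg (fun r : ℝ => (r : EReal)) (aux_keyDstar _ _ hc ha)
  have hSs : ∀ ξ : ℂ, liminfS (dualGstar H) (eFs ξ) =
      liminf (fun ζ : ℂ =>
        (((1 - ‖LH H ξ ζ‖ ^ 2) / ‖1 + LH H ξ ζ‖ ^ 2 : ℝ) : EReal)) (𝓝[≠] 0) := by
    intro ξ
    unfold liminfS
    apply aux_liminf eFs ξ
    intro ζ hζ
    obtain ⟨hc, ha⟩ := hsetup ξ ζ hζ
    show ((⟪dualGstar H (eFs ξ + (eFs (ξ + ζ) - eFs ξ)) - dualGstar H (eFs ξ),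
        eFs (ξ + ζ) - eFs ξ⟫
        / ‖dualGstar H (eFs ξ + (eFs (ξ + ζ) - eFs ξ)) - dualGstar H (eFs ξ)‖ ^ 2 : ℝ)
        : EReal) = _
    rw [hGsdiff, hincFs]
    exact congrArg (fun r : ℝ => (r : EReal)) (aux_keySstar _ _ hc ha)
  refine ⟨?_, ?_, ?_, ?_⟩
  · unfold Dset GammaP
    rw [← heF]
    exact aux_sets eF _ _ hD
  · unfold Sset GammaM
    rw [← heF,
      aux_inv_iInter (fun t => closure {x : ℂ | liminfS (dualG H) x ≤ (t : EReal)})]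
    exact aux_sets eF _ _ hS
  · unfold Dset GammaM
    rw [← heFs]
    exact aux_sets eFs _ _ hDs
  · unfold Sset GammaP
    rw [← heFs,
      aux_inv_iInter (fun t => closure {x : ℂ | liminfS (dualGstar H) x ≤ (t : EReal)})]
    exact aux_sets eFs _ _ hSs

end
end

section
/- Let G : ℝ² → ℝ² be a continuous strictly monotone vector field, let ξ₀ ∈ ℝ² and Λ, r > 0. If the ball B_r(ξ₀) is contained in V_Λ(G), then G is Λ-Lipschitz on B_r(ξ₀), i.e. |G(ξ) − G(ζ)| ≤ Λ|ξ − ζ| for all ξ, ζ ∈ B_r(ξ₀). -/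
open Filter Metric MeasureTheory Topology

noncomputable section

local notation "⟪" x ", " y "⟫" => @inner ℝ ℂ _ x y

/-- Pointwise local Lipschitz estimate from the liminf condition. -/
lemma stmt17_ptwise (G : ℂ → ℂ) (ξ : ℂ) (K Lam : ℝ) (hLam : 0 < Lam) (hK : Lam < K)
    (hξ : ((1 / Lam : ℝ) : EReal) ≤ liminfS G ξ) :
    ∃ δ > 0, ∀ η : ℂ, ‖η - ξ‖ < δ → ‖G η - G ξ‖ ≤ K * ‖η - ξ‖ := by
  have hK0 : 0 < K := hLam.trans hK
  set c : ℝ := 1 / K with hc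
  have hc0 : 0 < c := by positivity
  have hcΛ : c < 1 / Lam := one_div_lt_one_div_of_lt hLam hK
  have hlt : ((c : ℝ) : EReal) < liminfS G ξ :=
    lt_of_lt_of_le (by exact_mod_cast hcΛ) hξ
  have hev :
      ∀ᶠ ζ : ℂ in 𝓝[≠] 0,
        (c : EReal) < ((⟪G (ξ + ζ) - G ξ, ζ⟫ / ‖G (ξ + ζ) - G ξ‖ ^ 2 : ℝ) : EReal) :=
    Filter.eventually_lt_of_lt_liminf hlt
  rw [eventually_nhdsWithin_iff, Metric.eventually_nhds_iff] at hev
  obtain ⟨δ, hδ, h⟩ := hev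
  refine ⟨δ, hδ, fun η hη => ?_⟩
  rcases eq_or_ne η ξ with rfl | hne
  · simp
  set ζ : ℂ := η - ξ with hζdef
  have hζ0 : ζ ≠ 0 := sub_ne_zero.mpr hne
  have hmem : ζ ∈ ({0}ᶜ : Set ℂ) := hζ0
  have hdist : dist ζ (0 : ℂ) < δ := by simpa [dist_eq_norm] using hη
  have hlt2 := h hdist hmem
  have hηξ : ξ + ζ = η := by ring
  rw [hηξ] at hlt2
  have hlt3 : c < ⟪G η - G ξ, ζ⟫ / ‖G η - G ξ‖ ^ 2 := by exact_mod_cast hlt2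
  set A : ℂ := G η - G ξ with hA
  rcases eq_or_ne A 0 with hA0 | hA0
  · rw [hA0, norm_zero]
    positivity
  have hnA : 0 < ‖A‖ := norm_pos_iff.mpr hA0
  have hnA2 : 0 < ‖A‖ ^ 2 := by positivity
  have h1 : c * ‖A‖ ^ 2 < ⟪A, ζ⟫ := (lt_div_iff₀ hnA2).mp hlt3
  have h2 : ⟪A, ζ⟫ ≤ ‖A‖ * ‖ζ‖ := real_inner_le_norm A ζ
  have hcK : c * K = 1 := by rw [hc]; field_simp
  nlinarith [hnA, hc0, norm_nonneg ζ]

/-- Chaining the pointwise estimate along segments in a convex set. -/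
lemma stmt17_chain (G : ℂ → ℂ) (hGc : Continuous G) (s : Set ℂ) (hs : Convex ℝ s)
    (K : ℝ) (hK : 0 < K)
    (hloc : ∀ ξ ∈ s, ∃ δ > 0, ∀ η : ℂ, ‖η - ξ‖ < δ → ‖G η - G ξ‖ ≤ K * ‖η - ξ‖) :
    ∀ ξ ∈ s, ∀ ζ ∈ s, ‖G ξ - G ζ‖ ≤ K * ‖ξ - ζ‖ := by
  intro ξ hξ ζ hζ
  rcases eq_or_ne ξ ζ with rfl | hne
  · simp
  have hd : 0 < ‖ζ - ξ‖ := by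
    rw [norm_pos_iff, sub_ne_zero]; exact hne.symm
  set S : Set ℝ :=
    {t : ℝ | t ∈ Set.Icc (0 : ℝ) 1 ∧
      ‖G (ξ + t • (ζ - ξ)) - G ξ‖ ≤ K * (t * ‖ζ - ξ‖)} with hS
  have hγmem : ∀ t : ℝ, t ∈ Set.Icc (0 : ℝ) 1 → ξ + t • (ζ - ξ) ∈ s := by
    intro t ht
    have := hs hξ hζ (by linarith [ht.2] : (0:ℝ) ≤ 1 - t) ht.1 (by ring)
    convert this using 1
    rw [smul_sub, sub_smul, one_smul]
    abel
  have hclosed : IsClosed S := by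
    have h2 : IsClosed {t : ℝ | ‖G (ξ + t • (ζ - ξ)) - G ξ‖ ≤ K * (t * ‖ζ - ξ‖)} := by
      apply isClosed_le
      · exact ((hGc.comp (by continuity)).sub continuous_const).norm
      · continuity
    exact isClosed_Icc.inter h2
  have h0S : (0 : ℝ) ∈ S := by
    constructor
    · exact ⟨le_refl 0, zero_le_one⟩
    · simp
  have hbdd : BddAbove S := ⟨1, fun t ht => ht.1.2⟩
  set m : ℝ := sSup S with hm
  have hmS : m ∈ S := hclosed.csSup_mem ⟨0, h0S⟩ hbdd
  have hm1 : m = 1 := by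
    by_contra hm1
    have hmlt : m < 1 := lt_of_le_of_ne hmS.1.2 hm1
    obtain ⟨δ, hδ, hlocm⟩ := hloc _ (hγmem m hmS.1)
    set t : ℝ := min 1 (m + (δ / 2) / ‖ζ - ξ‖) with ht
    have htm : m < t := by
      apply lt_min hmlt
      have : 0 < (δ / 2) / ‖ζ - ξ‖ := by positivity
      linarith
    have ht1 : t ≤ 1 := min_le_left _ _
    have ht0 : 0 ≤ t := le_trans hmS.1.1 htm.le
    have hstep : (t - m) * ‖ζ - ξ‖ < δ := by
      have h1 : t ≤ m + (δ / 2) / ‖ζ - ξ‖ := min_le_right _ _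
      have h2 : (t - m) * ‖ζ - ξ‖ ≤ ((δ / 2) / ‖ζ - ξ‖) * ‖ζ - ξ‖ := by
        apply mul_le_mul_of_nonneg_right _ hd.le
        linarith
      have h3 : ((δ / 2) / ‖ζ - ξ‖) * ‖ζ - ξ‖ = δ / 2 := div_mul_cancel₀ _ hd.ne'
      linarith
    have hdiff : (ξ + t • (ζ - ξ)) - (ξ + m • (ζ - ξ)) = (t - m) • (ζ - ξ) := by
      rw [sub_smul]; abel
    have hnd : ‖(ξ + t • (ζ - ξ)) - (ξ + m • (ζ - ξ))‖ = (t - m) * ‖ζ - ξ‖ := by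
      rw [hdiff, norm_smul, Real.norm_eq_abs, abs_of_nonneg (by linarith : (0:ℝ) ≤ t - m)]
    have hseg := hlocm (ξ + t • (ζ - ξ)) (by rw [hnd]; exact hstep)
    rw [hnd] at hseg
    have htS : t ∈ S := by
      refine ⟨⟨ht0, ht1⟩, ?_⟩
      calc ‖G (ξ + t • (ζ - ξ)) - G ξ‖
          ≤ ‖G (ξ + t • (ζ - ξ)) - G (ξ + m • (ζ - ξ))‖ +
            ‖G (ξ + m • (ζ - ξ)) - G ξ‖ := norm_sub_le_norm_sub_add_norm_sub _ _ _
        _ ≤ K * ((t - m) * ‖ζ - ξ‖) + K * (m * ‖ζ - ξ‖) := add_le_add hseg hmS.2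
        _ = K * (t * ‖ζ - ξ‖) := by ring
    exact absurd (le_csSup hbdd htS) (not_le.mpr htm)
  have := hmS.2
  rw [hm1] at this
  simp only [one_smul, one_mul] at this
  have hζξ : ξ + (ζ - ξ) = ζ := by ring
  rw [hζξ] at this
  calc ‖G ξ - G ζ‖ = ‖G ζ - G ξ‖ := norm_sub_rev _ _
    _ ≤ K * ‖ζ - ξ‖ := this
    _ = K * ‖ξ - ζ‖ := by rw [norm_sub_rev]

theorem stmt17 (G : ℂ → ℂ) (hGc : Continuous G) (hGm : StrictlyMonotoneField G)
    (ξ₀ : ℂ) (Lam r : ℝ) (hLam : 0 < Lam) (hr : 0 < r)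
    (hV : ball ξ₀ r ⊆ Vset G Lam) :
    ∀ ξ ∈ ball ξ₀ r, ∀ ζ ∈ ball ξ₀ r, ‖G ξ - G ζ‖ ≤ Lam * ‖ξ - ζ‖ := by
  have hlim : ∀ ξ ∈ ball ξ₀ r, ((1 / Lam : ℝ) : EReal) ≤ liminfS G ξ := by
    intro ξ hξ
    have h := hV hξ
    have h2 : ξ ∈ {ξ : ℂ | ((1 / Lam : ℝ) : EReal) ≤ liminfS G ξ} := interior_subset h
    exact h2
  have hmain : ∀ K : ℝ, Lam < K →
      ∀ ξ ∈ ball ξ₀ r, ∀ ζ ∈ ball ξ₀ r, ‖G ξ - G ζ‖ ≤ K * ‖ξ - ζ‖ := by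
    intro K hK
    exact stmt17_chain G hGc _ (convex_ball ξ₀ r) K (hLam.trans hK)
      (fun ξ hξ => stmt17_ptwise G ξ K Lam hLam hK (hlim ξ hξ))
  intro ξ hξ ζ hζ
  rcases eq_or_ne ξ ζ with rfl | hne
  · simp
  have hd : 0 < ‖ξ - ζ‖ := by rw [norm_pos_iff, sub_ne_zero]; exact hne
  by_contra hcon
  push_neg at hcon
  set K : ℝ := (Lam + ‖G ξ - G ζ‖ / ‖ξ - ζ‖) / 2 with hKdef
  have hq : Lam < ‖G ξ - G ζ‖ / ‖ξ - ζ‖ := (lt_div_iff₀ hd).mpr hcon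
  have hK : Lam < K := by rw [hKdef]; linarith
  have h1 := hmain K hK ξ hξ ζ hζ
  have h2 : K * ‖ξ - ζ‖ < ‖G ξ - G ζ‖ := by
    have hqd : ‖G ξ - G ζ‖ / ‖ξ - ζ‖ * ‖ξ - ζ‖ = ‖G ξ - G ζ‖ := div_mul_cancel₀ _ hd.ne'
    rw [hKdef]
    nlinarith [hqd, hcon]
  linarith

end
end

section
/- Let μ, ν ∈ ℂ with |μ| + |ν| = 1. The following are equivalent: (a) for every nonempty connected open set Ω ⊆ ℂ and every differentiable function f : Ω → ℂ satisfying f_{z̄} = μ f_z + ν conj(f_z) at every point of Ω, either Re f is constant on Ω or Im f is constant on Ω; (b) μ = 0 and ν = 1 or ν = −1. -/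
open Filter Metric MeasureTheory Topology

noncomputable section

local notation "⟪" x ", " y "⟫" => @inner ℝ ℂ _ x y

lemma aux_const {Ω : Set ℂ} (hΩ : IsOpen Ω) (hconn : IsPreconnected Ω)
    {g : ℂ → ℝ} (hg : ∀ z ∈ Ω, HasFDerivAt g (0 : ℂ →L[ℝ] ℝ) z) :
    ∀ z ∈ Ω, ∀ w ∈ Ω, g z = g w := by
  have hloc : ∀ z ∈ Ω, ∃ ε > 0, ball z ε ⊆ Ω ∧ ∀ x ∈ ball z ε, g x = g z := by
    intro z hz
    obtain ⟨ε, hε, hball⟩ := Metric.isOpen_iff.1 hΩ z hz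
    refine ⟨ε, hε, hball, fun x hx => ?_⟩
    have hdiff : DifferentiableOn ℝ g (ball z ε) := fun y hy =>
      ((hg y (hball hy)).differentiableAt).differentiableWithinAt
    refine (convex_ball z ε).is_const_of_fderivWithin_eq_zero hdiff (fun y hy => ?_) hx
      (mem_ball_self hε)
    rw [fderivWithin_of_isOpen isOpen_ball hy, (hg y (hball hy)).fderiv]
  intro z hz w hw
  set A := {x | x ∈ Ω ∧ g x = g w} with hA
  set B := {x | x ∈ Ω ∧ g x ≠ g w} with hB
  have hAopen : IsOpen A := by
    rw [Metric.isOpen_iff]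
    rintro x ⟨hxΩ, hxg⟩
    obtain ⟨ε, hε, hsub, hc⟩ := hloc x hxΩ
    exact ⟨ε, hε, fun y hy => ⟨hsub hy, (hc y hy).trans hxg⟩⟩
  have hBopen : IsOpen B := by
    rw [Metric.isOpen_iff]
    rintro x ⟨hxΩ, hxg⟩
    obtain ⟨ε, hε, hsub, hc⟩ := hloc x hxΩ
    exact ⟨ε, hε, fun y hy => ⟨hsub hy, by rw [hc y hy]; exact hxg⟩⟩
  have hsub : Ω ⊆ A := by
    refine hconn.subset_left_of_subset_union hAopen hBopen ?_ ?_ ⟨w, hw, hw, rfl⟩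
    · rw [Set.disjoint_left]; rintro x ⟨_, hx⟩ ⟨_, hx'⟩; exact hx' hx
    · intro x hx
      by_cases hgx : g x = g w
      · exact Or.inl ⟨hx, hgx⟩
      · exact Or.inr ⟨hx, hgx⟩
  exact (hsub hz).2

lemma aux_comp_const {Ω : Set ℂ} (hΩ : IsOpen Ω) (hconn : IsPreconnected Ω) {f : ℂ → ℂ}
    (hdiff : ∀ z ∈ Ω, DifferentiableAt ℝ f z) (ℓ : ℂ →L[ℝ] ℝ)
    (h : ∀ z ∈ Ω, ℓ (fderiv ℝ f z 1) = 0 ∧ ℓ (fderiv ℝ f z Complex.I) = 0) :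
    ∀ z ∈ Ω, ∀ w ∈ Ω, ℓ (f z) = ℓ (f w) := by
  apply aux_const hΩ hconn
  intro z hz
  have hD := (hdiff z hz).hasFDerivAt
  have hcomp := ℓ.hasFDerivAt.comp z hD
  have hzero : ℓ.comp (fderiv ℝ f z) = 0 := by
    ext w
    have hw2 : fderiv ℝ f z w =
        w.re • fderiv ℝ f z 1 + w.im • fderiv ℝ f z Complex.I := by
      conv_lhs => rw [← Complex.re_add_im w]
      rw [show ((w.re : ℂ) + (w.im : ℂ) * Complex.I) = w.re • (1 : ℂ) + w.im • Complex.I by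
        simp [Complex.real_smul], map_add, _root_.map_smul, _root_.map_smul]
    simp only [ContinuousLinearMap.comp_apply, ContinuousLinearMap.zero_apply]
    rw [hw2, map_add, _root_.map_smul, _root_.map_smul]
    simp [(h z hz).1, (h z hz).2]
  exact hzero ▸ hcomp

lemma aux_nu_one {f : ℂ → ℂ} {z : ℂ} (he : wZbar f z = starRingEnd ℂ (wZ f z)) :
    (fderiv ℝ f z 1).im = 0 ∧ (fderiv ℝ f z Complex.I).im = 0 := by
  set D := fderiv ℝ f z with hD
  simp only [wZ, wZbar, ← hD, map_div₀, map_sub, map_mul, Complex.conj_I, map_ofNat] at he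
  have he2 : D 1 + Complex.I * D Complex.I =
      starRingEnd ℂ (D 1) + Complex.I * starRingEnd ℂ (D Complex.I) := by
    field_simp at he
    linear_combination he
  have hre := congrArg Complex.re he2
  have him := congrArg Complex.im he2
  simp [Complex.add_re, Complex.add_im, Complex.mul_re, Complex.mul_im,
    Complex.conj_re, Complex.conj_im, Complex.I_re, Complex.I_im] at hre him
  constructor <;> linarith

lemma aux_nu_negone {f : ℂ → ℂ} {z : ℂ} (he : wZbar f z = -starRingEnd ℂ (wZ f z)) :
    (fderiv ℝ f z 1).re = 0 ∧ (fderiv ℝ f z Complex.I).re = 0 := by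
  set D := fderiv ℝ f z with hD
  simp only [wZ, wZbar, ← hD, map_div₀, map_sub, map_mul, Complex.conj_I, map_ofNat] at he
  have he2 : D 1 + Complex.I * D Complex.I =
      -(starRingEnd ℂ (D 1) + Complex.I * starRingEnd ℂ (D Complex.I)) := by
    field_simp at he
    linear_combination he
  have hre := congrArg Complex.re he2
  have him := congrArg Complex.im he2
  simp [Complex.add_re, Complex.add_im, Complex.mul_re, Complex.mul_im,
    Complex.conj_re, Complex.conj_im, Complex.I_re, Complex.I_im] at hre him
  constructor <;> linarith

lemma aux_lin (a b : ℂ) (z : ℂ) :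
    HasFDerivAt (fun w : ℂ => a * w + b * (starRingEnd ℂ w))
      ((a • ContinuousLinearMap.id ℝ ℂ) + (b • Complex.conjCLE.toContinuousLinearMap)) z := by
  have h : (fun w : ℂ => a * w + b * (starRingEnd ℂ w)) =
      ⇑((a • ContinuousLinearMap.id ℝ ℂ) + (b • Complex.conjCLE.toContinuousLinearMap)) := by
    ext w
    simp [smul_eq_mul, Complex.conjCLE_apply]
  rw [h]
  exact ((a • ContinuousLinearMap.id ℝ ℂ) +
    (b • Complex.conjCLE.toContinuousLinearMap)).hasFDerivAt

lemma aux_wZ (a b : ℂ) (z : ℂ) :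
    wZ (fun w : ℂ => a * w + b * (starRingEnd ℂ w)) z = a := by
  unfold wZ
  rw [(aux_lin a b z).fderiv]
  simp [smul_eq_mul, Complex.conjCLE_apply, Complex.conj_I]
  ring_nf
  simp [Complex.I_sq]
  ring

lemma aux_wZbar (a b : ℂ) (z : ℂ) :
    wZbar (fun w : ℂ => a * w + b * (starRingEnd ℂ w)) z = b := by
  unfold wZbar
  rw [(aux_lin a b z).fderiv]
  simp [smul_eq_mul, Complex.conjCLE_apply, Complex.conj_I]
  ring_nf
  simp [Complex.I_sq]
  ring

lemma aux_key (μ ν : ℂ)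
    (hyp : ∀ Ω : Set ℂ, IsOpen Ω → IsConnected Ω → ∀ f : ℂ → ℂ,
      (∀ z ∈ Ω, DifferentiableAt ℝ f z) →
      (∀ z ∈ Ω, wZbar f z = μ * wZ f z + ν * starRingEnd ℂ (wZ f z)) →
      ((∀ z ∈ Ω, ∀ w ∈ Ω, (f z).re = (f w).re) ∨
        (∀ z ∈ Ω, ∀ w ∈ Ω, (f z).im = (f w).im)))
    (a : ℂ) :
    μ * a + ν * starRingEnd ℂ a = starRingEnd ℂ a ∨
      μ * a + ν * starRingEnd ℂ a = -starRingEnd ℂ a := by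
  set b := μ * a + ν * starRingEnd ℂ a with hb
  set f : ℂ → ℂ := fun w => a * w + b * starRingEnd ℂ w with hf
  have hwz : ∀ z : ℂ, wZ f z = a := fun z => aux_wZ a b z
  have hwzbar : ∀ z : ℂ, wZbar f z = b := fun z => aux_wZbar a b z
  have hdiff : ∀ z ∈ (Set.univ : Set ℂ), DifferentiableAt ℝ f z :=
    fun z _ => (aux_lin a b z).differentiableAt
  have heq : ∀ z ∈ (Set.univ : Set ℂ),
      wZbar f z = μ * wZ f z + ν * starRingEnd ℂ (wZ f z) := by
    intro z _
    rw [hwz, hwzbar]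
  rcases hyp Set.univ isOpen_univ ⟨⟨0, trivial⟩, isPreconnected_univ⟩ f hdiff heq with hre | him
  · right
    have h1 := hre 1 trivial 0 trivial
    have h2 := hre Complex.I trivial 0 trivial
    simp only [hf, mul_one, map_one, mul_zero, map_zero, add_zero, zero_add,
      Complex.conj_I, mul_neg] at h1 h2
    rw [Complex.ext_iff]
    simp only [Complex.add_re, Complex.add_im, Complex.mul_re, Complex.mul_im,
      Complex.neg_re, Complex.neg_im, Complex.conj_re, Complex.conj_im,
      Complex.I_re, Complex.I_im, Complex.zero_re, Complex.zero_im,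
      Complex.sub_re, Complex.sub_im] at h1 h2 ⊢
    constructor <;> [linarith [h1]; linarith [h2]]
  · left
    have h1 := him 1 trivial 0 trivial
    have h2 := him Complex.I trivial 0 trivial
    simp only [hf, mul_one, map_one, mul_zero, map_zero, add_zero, zero_add,
      Complex.conj_I, mul_neg] at h1 h2
    rw [Complex.ext_iff]
    simp only [Complex.add_re, Complex.add_im, Complex.mul_re, Complex.mul_im,
      Complex.neg_re, Complex.neg_im, Complex.conj_re, Complex.conj_im,
      Complex.I_re, Complex.I_im, Complex.zero_re, Complex.zero_im,
      Complex.sub_re, Complex.sub_im] at h1 h2 ⊢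
    constructor <;> [linarith [h2]; linarith [h1]]


theorem stmt18 (μ ν : ℂ) (h : ‖μ‖ + ‖ν‖ = 1) :
    (∀ Ω : Set ℂ, IsOpen Ω → IsConnected Ω → ∀ f : ℂ → ℂ,
      (∀ z ∈ Ω, DifferentiableAt ℝ f z) →
      (∀ z ∈ Ω, wZbar f z = μ * wZ f z + ν * starRingEnd ℂ (wZ f z)) →
      ((∀ z ∈ Ω, ∀ w ∈ Ω, (f z).re = (f w).re) ∨
        (∀ z ∈ Ω, ∀ w ∈ Ω, (f z).im = (f w).im))) ↔
    (μ = 0 ∧ (ν = 1 ∨ ν = -1)) := by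
  constructor
  · intro hyp
    have k1 := aux_key μ ν hyp 1
    have k2 := aux_key μ ν hyp Complex.I
    have k3 := aux_key μ ν hyp (1 + Complex.I)
    simp only [map_one, mul_one, Complex.conj_I, map_add, mul_neg] at k1 k2 k3
    rcases k1 with k1 | k1 <;> rcases k2 with k2 | k2
    · -- μ + ν = 1, μ - ν = -1 ⇒ μ = 0, ν = 1
      have k2' : μ - ν = -1 := mul_right_cancel₀ Complex.I_ne_zero (by linear_combination k2)
      exact ⟨by linear_combination (k1 + k2') / 2, Or.inl (by linear_combination (k1 - k2') / 2)⟩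
    · -- μ + ν = 1, μ - ν = 1 ⇒ μ = 1, ν = 0 : contradiction via k3
      have k2' : μ - ν = 1 := mul_right_cancel₀ Complex.I_ne_zero (by linear_combination k2)
      have hμ : μ = 1 := by linear_combination (k1 + k2') / 2
      have hν : ν = 0 := by linear_combination (k1 - k2') / 2
      subst hμ; subst hν
      exfalso
      rcases k3 with k3 | k3
      · exact Complex.I_ne_zero (by linear_combination k3 / 2)
      · exact one_ne_zero (α := ℂ) (by linear_combination k3 / 2)
    · -- μ + ν = -1, μ - ν = -1 ⇒ μ = -1, ν = 0 : contradiction via k3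
      have k2' : μ - ν = -1 := mul_right_cancel₀ Complex.I_ne_zero (by linear_combination k2)
      have hμ : μ = -1 := by linear_combination (k1 + k2') / 2
      have hν : ν = 0 := by linear_combination (k1 - k2') / 2
      subst hμ; subst hν
      exfalso
      rcases k3 with k3 | k3
      · exact one_ne_zero (α := ℂ) (by linear_combination -k3 / 2)
      · exact Complex.I_ne_zero (by linear_combination -k3 / 2)
    · -- μ + ν = -1, μ - ν = 1 ⇒ μ = 0, ν = -1
      have k2' : μ - ν = 1 := mul_right_cancel₀ Complex.I_ne_zero (by linear_combination k2)
      exact ⟨by linear_combination (k1 + k2') / 2, Or.inr (by linear_combination (k1 - k2') / 2)⟩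
  · rintro ⟨hμ, hν⟩ Ω hopen hconn f hdiff heq
    subst hμ
    rcases hν with hν | hν <;> subst hν
    · right
      have h0 : ∀ z ∈ Ω, Complex.imCLM (fderiv ℝ f z 1) = 0 ∧
          Complex.imCLM (fderiv ℝ f z Complex.I) = 0 := by
        intro z hz
        have he := heq z hz
        simp only [zero_mul, one_mul, zero_add] at he
        exact aux_nu_one he
      exact fun z hz w hw => aux_comp_const hopen hconn.2 hdiff Complex.imCLM h0 z hz w hw
    · left
      have h0 : ∀ z ∈ Ω, Complex.reCLM (fderiv ℝ f z 1) = 0 ∧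
          Complex.reCLM (fderiv ℝ f z Complex.I) = 0 := by
        intro z hz
        have he := heq z hz
        simp only [zero_mul, zero_add, neg_one_mul] at he
        exact aux_nu_negone he
      exact fun z hz w hw => aux_comp_const hopen hconn.2 hdiff Complex.reCLM h0 z hz w hw


end
end
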